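/- arXiv:2010.10134 — 14 statements merged into one kernel-verified Lean document; each statement's English description precedes it below -/
import Mathlib

section
/- (Path-encoding lemma of Sankowski.) Regard 1 − u·Ã as a matrix over the polynomial ring R[u] and let adj denote the adjugate, so that (1 − u·Ã) * adj(1 − u·Ã) = det(1 − u·Ã) • 1. For all i, j ∈ V, the (i,j) entry of adj(1 − u·Ã) is nonzero if and only if j is reachable from i in G, and in that case the least degree of u occurring with nonzero coefficient in this entry equals dist_G(i,j), the length of the shortest path in G from i to j. -/
/-!
Over formal power series `1 - u • Ã` is invertible with inverse `∑ₖ uᵏ Ãᵏ`, so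
`adj (1 - u • Ã) = det (1 - u • Ã) • ∑ₖ uᵏ Ãᵏ`. The determinant has constant term `1`, hence is a
unit and does not change the order in `u`: the `(i,j)` entry of the adjugate has trailing degree
the least `k` with `(Ãᵏ) i j ≠ 0`. Finally `(Ãᵏ) i j ≠ 0` exactly when there is a walk of
length `k` from `i` to `j`, since evaluating every variable at `1` turns it into the number of
such walks.
-/

def HasWalk {V : Type*} (E : Set (V × V)) (d : ℕ) (i j : V) : Prop :=
  ∃ v : Fin (d + 1) → V, v 0 = i ∧ v (Fin.last d) = j ∧
    ∀ t : Fin d, (v t.castSucc, v t.succ) ∈ E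

open PowerSeries

section Walks

variable {V : Type*} {E : Set (V × V)} {i j : V}

theorem hasWalk_zero_iff : HasWalk E 0 i j ↔ i = j := by
  constructor
  · rintro ⟨v, rfl, rfl, -⟩
    rfl
  · rintro rfl
    exact ⟨fun _ => i, rfl, rfl, fun t => t.elim0⟩

theorem hasWalk_succ_iff {d : ℕ} :
    HasWalk E (d + 1) i j ↔ ∃ m, HasWalk E d i m ∧ (m, j) ∈ E := by
  constructor
  · rintro ⟨v, h0, rfl, hE⟩
    refine ⟨v (Fin.last d).castSucc, ⟨Fin.init v, h0, rfl, fun t => ?_⟩, ?_⟩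
    · change (v _, v _) ∈ E
      rw [← Fin.succ_castSucc]
      exact hE t.castSucc
    · simpa using hE (Fin.last d)
  · rintro ⟨m, ⟨v, h0, rfl, hE⟩, hmj⟩
    refine ⟨Fin.snoc v j, by simpa using h0, by simp, fun t => ?_⟩
    induction t using Fin.lastCases with
    | last => simpa using hmj
    | cast s =>
      rw [Fin.succ_castSucc, Fin.snoc_castSucc, Fin.snoc_castSucc]
      exact hE s

end Walks

namespace Matrix

variable {V : Type*} [Fintype V] [DecidableEq V] {E : Set (V × V)} {d : ℕ} {i j : V}

theorem pow_apply_eq_zero_of_not_hasWalk {R : Type*} [Semiring R] {B : Matrix V V R}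
    (hB : ∀ i j, (i, j) ∉ E → B i j = 0) (h : ¬HasWalk E d i j) : (B ^ d) i j = 0 := by
  induction d generalizing j with
  | zero => exact one_apply_ne fun hij => h (hasWalk_zero_iff.mpr hij)
  | succ d ih =>
    rw [pow_succ, mul_apply]
    refine Finset.sum_eq_zero fun m _ => ?_
    by_cases hm : HasWalk E d i m
    · rw [hB m j fun hmj => h (hasWalk_succ_iff.mpr ⟨m, hm, hmj⟩), mul_zero]
    · rw [ih hm, zero_mul]

theorem pow_apply_ne_zero_of_hasWalk {B : Matrix V V ℕ} (hB : ∀ i j, (i, j) ∈ E → B i j ≠ 0)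
    (h : HasWalk E d i j) : (B ^ d) i j ≠ 0 := by
  induction d generalizing j with
  | zero => simp [hasWalk_zero_iff.mp h]
  | succ d ih =>
    obtain ⟨m, hm, hmj⟩ := hasWalk_succ_iff.mp h
    rw [pow_succ, mul_apply]
    exact fun hsum => mul_ne_zero (ih hm) (hB m j hmj)
      (Finset.sum_eq_zero_iff.mp hsum m (Finset.mem_univ m))

theorem pow_apply_ne_zero_iff_hasWalk [DecidablePred fun p => p ∈ E]
    {A : Matrix V V (MvPolynomial (V × V) ℤ)}
    (hA : ∀ i j, A i j = if (i, j) ∈ E then MvPolynomial.X (i, j) else 0) :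
    (A ^ d) i j ≠ 0 ↔ HasWalk E d i j := by
  refine ⟨not_imp_comm.mp (pow_apply_eq_zero_of_not_hasWalk fun i j h => by simp [hA, h]),
    fun h hAd => ?_⟩
  let B : Matrix V V ℕ := of fun i j => if (i, j) ∈ E then 1 else 0
  let ev := MvPolynomial.eval fun _ : V × V => (1 : ℤ)
  have hAB : ev.mapMatrix A = (Nat.castRingHom ℤ).mapMatrix B := by
    ext i j
    simp [B, ev, hA, apply_ite ev]
  have hAdB : ev ((A ^ d) i j) = ((B ^ d) i j : ℤ) := by
    change ev.mapMatrix (A ^ d) i j = (Nat.castRingHom ℤ).mapMatrix (B ^ d) i j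
    rw [map_pow, map_pow, hAB]
  rw [hAd, map_zero] at hAdB
  exact pow_apply_ne_zero_of_hasWalk (B := B) (fun i j h => by simp [B, h]) h
    (by exact_mod_cast hAdB.symm)

end Matrix

namespace PowerSeries

variable {R : Type*} [Semiring R]

theorem order_isUnit_mul {u : R⟦X⟧} (hu : IsUnit u) (φ : R⟦X⟧) : (u * φ).order = φ.order := by
  obtain ⟨u, rfl⟩ := hu
  refine le_antisymm ?_ (le_add_self.trans (le_order_mul _ _))
  calc (↑u * φ).order ≤ (↑u⁻¹ : R⟦X⟧).order + (↑u * φ).order := le_add_self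
    _ ≤ φ.order := by simpa using le_order_mul (↑u⁻¹ : R⟦X⟧) (↑u * φ)

theorem order_mk {f : ℕ → R} (h : ∃ k, f k ≠ 0) : (mk f).order = (sInf {k | f k ≠ 0} : ℕ) := by
  rw [order_eq_nat, coeff_mk]
  exact ⟨Nat.sInf_mem h, fun k hk => by simpa [coeff_mk] using Nat.notMem_of_lt_sInf hk⟩

end PowerSeries

theorem Polynomial.order_coe {R : Type*} [Semiring R] (p : Polynomial R) :
    (p : R⟦X⟧).order = p.trailingDegree := by
  rcases eq_or_ne p 0 with rfl | hp
  · simp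
  rw [trailingDegree_eq_natTrailingDegree hp, order_eq_nat]
  simp only [coeff_coe]
  exact ⟨trailingCoeff_nonzero_iff_nonzero.mpr hp,
    fun k hk => coeff_eq_zero_of_lt_natTrailingDegree hk⟩

namespace Matrix

variable {n R : Type*} [Fintype n] [DecidableEq n] [CommRing R]

theorem one_sub_X_mul_C_mul_mk_pow (B : Matrix n n R) :
    (1 - of fun i j => X * C (B i j)) * of (fun i j => mk fun k => (B ^ k) i j) =
      (1 : Matrix n n R⟦X⟧) := by
  rw [sub_mul, Matrix.one_mul, sub_eq_iff_eq_add]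
  ext i j (_ | k)
  · simp [mul_apply, one_apply]
  · simp [mul_apply, one_apply, apply_ite (coeff (k + 1)), mul_assoc, coeff_succ_X_mul, pow_succ']

variable {B : Matrix n n R} {M : Matrix n n (Polynomial R)}

theorem coe_adjugate_apply (hM : M = 1 - of fun i j => Polynomial.X * Polynomial.C (B i j))
    (i j : n) :
    ((M.adjugate i j : Polynomial R) : R⟦X⟧) = (M.det : R⟦X⟧) * mk fun k => (B ^ k) i j := by
  let φ := Polynomial.coeToPowerSeries.ringHom (R := R)
  let S : Matrix n n R⟦X⟧ := of fun i j => mk fun k => (B ^ k) i j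
  have hMφ : φ.mapMatrix M = 1 - of fun i j => X * C (B i j) := by
    ext i j : 1
    by_cases hij : i = j <;> simp [hM, φ, hij] <;> ring
  have hadj : (φ.mapMatrix M).adjugate = (φ.mapMatrix M).det • S :=
    calc _ = (φ.mapMatrix M).adjugate * (φ.mapMatrix M * S) := by
          rw [hMφ, one_sub_X_mul_C_mul_mk_pow, Matrix.mul_one]
      _ = _ := by rw [← Matrix.mul_assoc, adjugate_mul, smul_mul, Matrix.one_mul]
  have := congr_fun₂ hadj i j
  rwa [← RingHom.map_adjugate, ← RingHom.map_det] at this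

theorem coeff_zero_det (hM : M = 1 - of fun i j => Polynomial.X * Polynomial.C (B i j)) :
    M.det.coeff 0 = 1 := by
  rw [Polynomial.coeff_zero_eq_eval_zero, ← Polynomial.coe_evalRingHom, RingHom.map_det]
  have hM0 : (Polynomial.evalRingHom 0).mapMatrix M = 1 := by
    ext i j
    by_cases hij : i = j <;> simp [hM, one_apply, hij]
  rw [hM0, det_one]

theorem isUnit_coe_det (hM : M = 1 - of fun i j => Polynomial.X * Polynomial.C (B i j)) :
    IsUnit (M.det : R⟦X⟧) := by
  rw [isUnit_iff_constantCoeff, ← coeff_zero_eq_constantCoeff_apply, Polynomial.coeff_coe,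
    coeff_zero_det hM]
  exact isUnit_one

theorem adjugate_apply_ne_zero_iff
    (hM : M = 1 - of fun i j => Polynomial.X * Polynomial.C (B i j)) (i j : n) :
    M.adjugate i j ≠ 0 ↔ ∃ d, (B ^ d) i j ≠ 0 := by
  rw [Ne, ← Polynomial.coe_eq_zero_iff, coe_adjugate_apply hM,
    (isUnit_coe_det hM).mul_right_eq_zero, ← Ne, ← exists_coeff_ne_zero_iff_ne_zero]
  simp only [coeff_mk]

theorem natTrailingDegree_adjugate_apply
    (hM : M = 1 - of fun i j => Polynomial.X * Polynomial.C (B i j)) {i j : n}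
    (h : ∃ d, (B ^ d) i j ≠ 0) :
    (M.adjugate i j).natTrailingDegree = sInf {d | (B ^ d) i j ≠ 0} := by
  rw [Polynomial.natTrailingDegree, ← Polynomial.order_coe, coe_adjugate_apply hM,
    order_isUnit_mul (isUnit_coe_det hM), order_mk h, ENat.toNat_natCast]

end Matrix

theorem stmt2_general {V : Type*} [Fintype V] [DecidableEq V]
    (E : Set (V × V)) [DecidablePred fun p => p ∈ E]
    (A : Matrix V V (MvPolynomial (V × V) ℤ))
    (hA : ∀ i j, A i j = if (i, j) ∈ E then MvPolynomial.X (i, j) else 0)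
    (M : Matrix V V (Polynomial (MvPolynomial (V × V) ℤ)))
    (hM : M = 1 - Matrix.of fun i j => Polynomial.X * Polynomial.C (A i j)) :
    ∀ i j : V,
      (M.adjugate i j ≠ 0 ↔ ∃ d, HasWalk E d i j) ∧
      ((∃ d, HasWalk E d i j) →
        (M.adjugate i j).natTrailingDegree = sInf {d : ℕ | HasWalk E d i j}) := by
  intro i j
  have hwalk (d : ℕ) : (A ^ d) i j ≠ 0 ↔ HasWalk E d i j := Matrix.pow_apply_ne_zero_iff_hasWalk hA
  simp only [← hwalk]
  exact ⟨Matrix.adjugate_apply_ne_zero_iff hM i j, Matrix.natTrailingDegree_adjugate_apply hM⟩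

/-- Path-encoding lemma of Sankowski: the `(i,j)` entry of the adjugate of `1 - u • Ã`
(over the polynomial ring `R[u]`) is nonzero iff `j` is reachable from `i`, in which case
its trailing degree (least degree of `u` with nonzero coefficient) equals `dist_G(i,j)`. -/
theorem stmt2 {V : Type*} [Fintype V] [DecidableEq V] [Nonempty V]
    (E : Set (V × V)) [DecidablePred fun p => p ∈ E]
    (A : Matrix V V (MvPolynomial (V × V) ℤ))
    (hA : ∀ i j, A i j = if (i, j) ∈ E then MvPolynomial.X (i, j) else 0)
    (M : Matrix V V (Polynomial (MvPolynomial (V × V) ℤ)))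
    (hM : M = 1 - Matrix.of fun i j => Polynomial.X * Polynomial.C (A i j)) :
    ∀ i j : V,
      (M.adjugate i j ≠ 0 ↔ ∃ d, HasWalk E d i j) ∧
      ((∃ d, HasWalk E d i j) →
        (M.adjugate i j).natTrailingDegree = sInf {d : ℕ | HasWalk E d i j}) :=
  stmt2_general E A hA M hM
end

section
/- (Correctness of the lazy rank-one inverse update.) Let M be an invertible n×n matrix over F and let T, N be n×n matrices with M⁻¹ = T(I + N). Fix a scalar v ∈ F and indices i, j, and let b be the row vector defined by b_ℓ = v·(M⁻¹)_{jℓ} (i.e., b = v·e_jᵀM⁻¹). Assume 1 + b_i ≠ 0. Then I + e_i b is invertible with det(I + e_i b) = 1 + b_i; writing B := (I + e_i b)⁻¹ and N' := N·B + B − I, the matrix M' := M + v·e_i e_jᵀ is invertible, with (M')⁻¹ = T(I + N') and det M' = (1 + b_i)·det M. Moreover, every row of N' that is not identically zero is either a row index at which N is not identically zero, or the index i. -/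
/-!
Since `b = v • M⁻¹ j` satisfies `b ᵥ* M = v • e_j`, the update factors as
`M' = (I + e_i b) * M`. The determinant formula is the matrix determinant lemma, and
`M'⁻¹ = M⁻¹ (I + e_i b)⁻¹ = T (I + N) B = T (I + N')`. Every row `p ≠ i` of `I + e_i b` is the
identity row, hence so is row `p` of `B`, and row `p` of `I + N' = (I + N) B` whenever row `p`
of `N` vanishes.
-/

namespace Matrix

variable {n : Type*} [Fintype n] [DecidableEq n]

theorem row_mul_of_row_eq_one {α : Type*} [NonAssocSemiring α] {A : Matrix n n α} {p : n}
    (hA : A p = (1 : Matrix n n α) p) (B : Matrix n n α) : (A * B) p = B p := by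
  ext q
  simp [mul_apply, congrFun hA, one_apply]

variable {R : Type*} [CommRing R]

theorem det_one_add_vecMulVec (u w : n → R) : det (1 + vecMulVec u w) = 1 + w ⬝ᵥ u := by
  rw [vecMulVec_eq Unit, det_one_add_replicateCol_mul_replicateRow]

theorem vecMulVec_single_smul_inv_row_mul {M : Matrix n n R} (hM : IsUnit M) (v : R) (i j : n) :
    vecMulVec (Pi.single i 1) (v • M⁻¹ j) * M = v • single i j 1 := by
  have hrow : M⁻¹ j ᵥ* M = Pi.single j 1 := by
    ext k
    simpa [mul_apply, vecMul, dotProduct, one_apply, Pi.single_apply, eq_comm] using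
      congrFun₂ (nonsing_inv_mul M ((isUnit_iff_isUnit_det M).mp hM)) j k
  rw [vecMulVec_mul, smul_vecMul, hrow, single_eq_single_vecMulVec_single]
  ext p q
  simp [vecMulVec_apply, mul_left_comm]

theorem inv_row_eq_one_of_row_eq_one {A : Matrix n n R} (hA : IsUnit A) {p : n}
    (h : A p = (1 : Matrix n n R) p) : A⁻¹ p = (1 : Matrix n n R) p := by
  rw [← row_mul_of_row_eq_one h A⁻¹, mul_nonsing_inv A ((isUnit_iff_isUnit_det A).mp hA)]

end Matrix

open Matrix

/-- Correctness of the lazy rank-one inverse update: if `M⁻¹ = T(I + N)`, `b = v·e_jᵀM⁻¹`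
and `1 + b i ≠ 0`, then `I + e_i b` is invertible with determinant `1 + b i`, and setting
`B = (I + e_i b)⁻¹`, `N' = N·B + B − I`, the matrix `M' = M + v·e_i e_jᵀ` is invertible with
`(M')⁻¹ = T(I + N')` and `det M' = (1 + b i)·det M`; moreover every nonzero row of `N'` is
either a nonzero row of `N` or the row `i`. -/
theorem stmt4 {n : Type*} [Fintype n] [DecidableEq n] {F : Type*} [Field F]
    (M T N : Matrix n n F) (hM : IsUnit M)
    (hTN : M⁻¹ = T * (1 + N))
    (v : F) (i j : n)
    (b : n → F) (hb : ∀ ℓ, b ℓ = v * M⁻¹ j ℓ)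
    (hbi : (1 : F) + b i ≠ 0)
    (Eib : Matrix n n F) (hEib : Eib = Matrix.vecMulVec (Pi.single i 1) b)
    (B : Matrix n n F) (hB : B = (1 + Eib)⁻¹)
    (N' : Matrix n n F) (hN' : N' = N * B + B - 1)
    (M' : Matrix n n F) (hM' : M' = M + v • Matrix.single i j 1) :
    IsUnit (1 + Eib) ∧ (1 + Eib).det = 1 + b i ∧
    IsUnit M' ∧ M'⁻¹ = T * (1 + N') ∧ M'.det = (1 + b i) * M.det ∧
    ∀ p : n, (∃ q, N' p q ≠ 0) → (∃ q, N p q ≠ 0) ∨ p = i := by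
  have hdet : (1 + Eib).det = 1 + b i := by
    rw [hEib, det_one_add_vecMulVec, dotProduct_single_one]
  have hU : IsUnit (1 + Eib) := (isUnit_iff_isUnit_det _).mpr (hdet ▸ hbi.isUnit)
  have hfactor : M' = (1 + Eib) * M := by
    rw [hM', Matrix.add_mul, Matrix.one_mul, hEib, show b = v • M⁻¹ j from funext hb,
      vecMulVec_single_smul_inv_row_mul hM]
  have hN'B : 1 + N' = (1 + N) * B := by
    rw [hN', Matrix.add_mul, Matrix.one_mul]
    abel
  refine ⟨hU, hdet, hfactor ▸ hU.mul hM, ?_, by rw [hfactor, det_mul, hdet], ?_⟩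
  · rw [hfactor, Matrix.mul_inv_rev, hTN, ← hB, hN'B, Matrix.mul_assoc]
  rintro p ⟨q, hpq⟩
  by_cases hpi : p = i
  · exact Or.inr hpi
  left
  by_contra! hN0
  have hBp : B p = (1 : Matrix n n F) p := by
    rw [hB]
    refine inv_row_eq_one_of_row_eq_one hU ?_
    ext r
    simp [hEib, vecMulVec_apply, hpi]
  have hN'p : (1 + N') p = (1 : Matrix n n F) p := by
    rw [hN'B, row_mul_of_row_eq_one (by ext r; simp [hN0]), hBp]
  exact hpq (by simpa using congrFun hN'p q)
end

section
/- Let A be an invertible square matrix over a commutative ring and let S be a set of row indices. If for every row index p ∉ S the p-th row of A equals the p-th row of the identity matrix, then for every row index p ∉ S the p-th row of A⁻¹ equals the p-th row of the identity matrix; that is, a matrix that differs from the identity only in the rows of S has an inverse that differs from the identity only in the rows of S. -/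
namespace Matrix

theorem mul_apply_of_row_eq_one_row {m n : Type*} [Fintype m] [DecidableEq m] {α : Type*}
    [NonAssocSemiring α] {A : Matrix m m α} (B : Matrix m n α) {p : m}
    (hrow : A p = (1 : Matrix m m α) p) (q : n) :
    (A * B) p q = B p q := by
  rw [mul_apply, hrow, ← mul_apply, Matrix.one_mul]

end Matrix

/-- A matrix that differs from the identity only in the rows of `S` has an inverse that
differs from the identity only in the rows of `S`. -/
theorem stmt5 {n : Type*} [Fintype n] [DecidableEq n] {R : Type*} [CommRing R]
    (A : Matrix n n R) (hA : IsUnit A) (S : Set n)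
    (h : ∀ p ∉ S, ∀ q, A p q = (1 : Matrix n n R) p q) :
    ∀ p ∉ S, ∀ q, A⁻¹ p q = (1 : Matrix n n R) p q := by
  intro p hp q
  rw [← Matrix.mul_apply_of_row_eq_one_row A⁻¹ (funext (h p hp)),
    Matrix.mul_nonsing_inv A ((Matrix.isUnit_iff_isUnit_det A).mp hA)]
end

section
/- For every natural number w and every real number p with 2^{−(w+1)} ≤ p ≤ 2^{−w}, one has 2^w · p · (1 − p)^{2^w − 1} ≥ 1/(2e). (This is the bound showing that when the number of witnesses c satisfies n/2^{w+1} ≤ c ≤ n/2^w, sampling 2^w columns independently with probability p = c/n isolates exactly one witness with probability at least 1/(2e).) -/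
/-!
With `n = 2^w`, the hypotheses give `n p ≥ 1/2` and `p ≤ 1/n`, so
`(1 - p)^(n-1) ≥ (1 - 1/n)^(n-1) = (1 + 1/(n-1))^(-(n-1)) ≥ e⁻¹`.
-/

open Real

lemma exp_neg_one_le_one_sub_inv_succ_pow (m : ℕ) :
    exp (-1) ≤ (1 - ((m : ℝ) + 1)⁻¹) ^ m := by
  rcases Nat.eq_zero_or_pos m with rfl | hm
  · simp
  have hm' : (0 : ℝ) < m := by exact_mod_cast hm
  have hbase : 1 - ((m : ℝ) + 1)⁻¹ = (1 + (m : ℝ)⁻¹)⁻¹ := by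
    field_simp
    ring
  rw [hbase, inv_pow, exp_neg]
  exact inv_anti₀ (by positivity) one_add_inv_pow_le_exp

lemma exp_neg_one_le_one_sub_pow_pred {n : ℕ} {p : ℝ} (hp : p ≤ (n : ℝ)⁻¹) :
    exp (-1) ≤ (1 - p) ^ (n - 1) := by
  obtain _ | m := n
  · simp
  rw [Nat.add_sub_cancel]
  push_cast at hp
  have hinv_le_one : ((m : ℝ) + 1)⁻¹ ≤ 1 :=
    inv_le_one_of_one_le₀ (by linarith [m.cast_nonneg (α := ℝ)])
  calc exp (-1) ≤ (1 - ((m : ℝ) + 1)⁻¹) ^ m := exp_neg_one_le_one_sub_inv_succ_pow m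
    _ ≤ (1 - p) ^ m := pow_le_pow_left₀ (by linarith) (by linarith) m

/-- For every `w : ℕ` and real `p` with `2^{-(w+1)} ≤ p ≤ 2^{-w}`, one has
`2^w · p · (1 − p)^{2^w − 1} ≥ 1/(2e)`. -/
theorem stmt7 (w : ℕ) (p : ℝ)
    (h1 : ((2 : ℝ) ^ (w + 1))⁻¹ ≤ p) (h2 : p ≤ ((2 : ℝ) ^ w)⁻¹) :
    1 / (2 * Real.exp 1) ≤ (2 : ℝ) ^ w * p * (1 - p) ^ (2 ^ w - 1) := by
  have hnp : 2⁻¹ ≤ (2 : ℝ) ^ w * p := by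
    rw [pow_succ, mul_inv, inv_mul_le_iff₀ (by positivity)] at h1
    linarith
  have hpow : exp (-1) ≤ (1 - p) ^ (2 ^ w - 1) :=
    exp_neg_one_le_one_sub_pow_pred (n := 2 ^ w) (by exact_mod_cast h2)
  calc 1 / (2 * exp 1) = 2⁻¹ * exp (-1) := by rw [exp_neg]; ring
    _ ≤ (2 : ℝ) ^ w * p * (1 - p) ^ (2 ^ w - 1) :=
      mul_le_mul hnp hpow (exp_pos _).le (by linarith)
end

section
/- (Color-coding count.) Let V be a finite type, let k ≥ 1, and let v : ZMod k → V be an injective map (the vertices of a directed k-cycle, listed in cyclic order). The number of colorings χ : V → ZMod k such that there exists a rotation r ∈ ZMod k with χ(v(ℓ + r)) = ℓ for all ℓ ∈ ZMod k equals k · k^{|V| − k}. Equivalently, a uniformly random coloring of V with k colors makes the given k-cycle colorful (exactly one vertex of each color, in color order around the cycle) with probability exactly 1/k^{k−1}. -/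
/-!
A coloring with rotation `r` satisfies `χ (v 0) = -r`, so the rotation is unique and the count
is the sum over `r` of the number of colorings with prescribed colors on the `k` vertices of
the cycle. Each summand is `k ^ (|V| - k)`: the colors of the other vertices are free.
-/

open Finset

theorem card_extensions_of_injective {ι V α : Type*} [Fintype ι] [Fintype V] [Fintype α]
    [DecidableEq V] [DecidableEq α] {v : ι → V} (hv : Function.Injective v) (g : ι → α) :
    Fintype.card {f : V → α // ∀ i, f (v i) = g i} =
      Fintype.card α ^ (Fintype.card V - Fintype.card ι) := by
  classical
  let t : V → Finset α := fun x => {a | ∀ i, v i = x → a = g i}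
  have mem_piFinset_t (f : V → α) : f ∈ Fintype.piFinset t ↔ ∀ i, f (v i) = g i := by
    simp only [Fintype.mem_piFinset, t, mem_filter, mem_univ, true_and]
    exact ⟨fun h i => h _ i rfl, fun h x i hi => hi ▸ h i⟩
  have card_t (x : V) : #(t x) = if x ∈ Set.range v then 1 else Fintype.card α := by
    split_ifs with hx
    · obtain ⟨j, rfl⟩ := hx
      refine card_eq_one.mpr ⟨g j, ?_⟩
      ext a
      simp only [t, mem_filter, mem_univ, true_and, mem_singleton]
      exact ⟨fun h => h j rfl, fun h i hij => hv hij ▸ h⟩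
    · refine card_eq_of_equiv_fintype (Equiv.subtypeUnivEquiv fun a => ?_)
      simp only [t, mem_filter, mem_univ, true_and]
      exact fun i hi => absurd ⟨i, hi⟩ hx
  calc Fintype.card {f : V → α // ∀ i, f (v i) = g i}
      = #(Fintype.piFinset t) := by
        rw [Fintype.card_subtype]; congr 1; ext f; simp [mem_piFinset_t]
    _ = ∏ x, if x ∈ Set.range v then 1 else Fintype.card α := by
        rw [Fintype.card_piFinset]; exact prod_congr rfl fun x _ => card_t x
    _ = Fintype.card α ^ Fintype.card {x // x ∉ Set.range v} := by
        rw [prod_ite, prod_const_one, one_mul, prod_const, Fintype.card_subtype]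
    _ = Fintype.card α ^ (Fintype.card V - Fintype.card ι) := by
        rw [Fintype.card_subtype_compl, ← Set.card_range_of_injective hv]

theorem Fintype.card_subtype_exists_of_unique {α β : Type*} [Fintype α] [Fintype β]
    (P : β → α → Prop) [∀ b, DecidablePred (P b)] [DecidablePred fun a => ∃ b, P b a]
    (hP : ∀ a b b', P b a → P b' a → b = b') :
    Fintype.card {a // ∃ b, P b a} = ∑ b, Fintype.card {a // P b a} := by
  rw [← Fintype.card_sigma]
  refine (Fintype.card_of_bijective (f := fun x : Σ b, {a // P b a} => ⟨x.2.1, x.1, x.2.2⟩)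
    ⟨?_, fun a => ?_⟩).symm
  · rintro ⟨b, a, ha⟩ ⟨b', a', ha'⟩ h
    obtain rfl : a = a' := congrArg Subtype.val h
    obtain rfl := hP a b b' ha ha'
    rfl
  · obtain ⟨a, b, ha⟩ := a
    exact ⟨⟨b, a, ha⟩, rfl⟩

/-- Color-coding count: if `v : ZMod k → V` lists the vertices of a directed `k`-cycle in
cyclic order (injectively), then the number of colorings `χ : V → ZMod k` for which some
rotation `r` satisfies `χ (v (ℓ + r)) = ℓ` for all `ℓ` equals `k * k^(|V| - k)`. -/
theorem stmt8 {V : Type*} [Fintype V] [DecidableEq V] (k : ℕ) [NeZero k]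
    (v : ZMod k → V) (hv : Function.Injective v) :
    Fintype.card {χ : V → ZMod k // ∃ r : ZMod k, ∀ ℓ : ZMod k, χ (v (ℓ + r)) = ℓ}
      = k * k ^ (Fintype.card V - k) := by
  have rotation_eq (χ : V → ZMod k) (r : ZMod k) (h : ∀ ℓ, χ (v (ℓ + r)) = ℓ) :
      r = -χ (v 0) := by
    simpa [neg_eq_iff_eq_neg] using (h (-r)).symm
  have card_rotation (r : ZMod k) :
      Fintype.card {χ : V → ZMod k // ∀ ℓ, χ (v (ℓ + r)) = ℓ} = k ^ (Fintype.card V - k) := by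
    simpa using card_extensions_of_injective (hv.comp (add_left_injective r)) id
  rw [Fintype.card_subtype_exists_of_unique _ fun χ r r' h h' =>
    (rotation_eq χ r h).trans (rotation_eq χ r' h').symm]
  simp [card_rotation]
end

section
/- In the OMv gadget, there exists a walk from w₀ to w₁ of length at most 4 if and only if there exist indices j, k with u j, M j k, and v k (i.e., iff uᵀMv = 1); moreover, when this holds the distance from w₀ to w₁ equals 3, and when it fails every walk from w₀ to w₁ has length at least 5. -/
/-- Vertices of the OMv gadget: `w₀`, `w₁`, the `a`-side and the `b`-side. -/
inductive OMvVert (n : ℕ) : Type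
  | w0 : OMvVert n
  | w1 : OMvVert n
  | a : Fin n → OMvVert n
  | b : Fin n → OMvVert n

/-- One direction of each edge of the OMv gadget. -/
def omvRel (n : ℕ) (M : Fin n → Fin n → Prop) (u v : Fin n → Prop) :
    OMvVert n → OMvVert n → Prop := fun x y =>
  (∃ j, x = OMvVert.w0 ∧ y = OMvVert.a j ∧ u j) ∨
  (∃ j k, x = OMvVert.a j ∧ y = OMvVert.b k ∧ M j k) ∨
  (∃ k, x = OMvVert.b k ∧ y = OMvVert.w1 ∧ v k)

/-- The OMv gadget graph. -/
def omvGraph (n : ℕ) (M : Fin n → Fin n → Prop) (u v : Fin n → Prop) :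
    SimpleGraph (OMvVert n) :=
  SimpleGraph.fromRel (omvRel n M u v)

/-!
Grade the vertices by `w₀ ↦ 0`, `aⱼ ↦ 1`, `bₖ ↦ 2`, `w₁ ↦ 3`. Every edge changes the level by
exactly one, so every walk from `w₀` to `w₁` has length `3 + 2m`. Hence a walk of length at most 4
has length 3, and such a walk is necessarily `w₀ aⱼ bₖ w₁`, which exists iff `u j ∧ M j k ∧ v k`.
-/

namespace SimpleGraph.Walk

variable {V : Type*} {G : SimpleGraph V}

theorem exists_length_eq_sub_add_two_mul (f : V → ℤ)
    (hf : ∀ x y, G.Adj x y → f y = f x + 1 ∨ f y = f x - 1) {x y : V} (p : G.Walk x y) :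
    ∃ m : ℕ, (p.length : ℤ) = f y - f x + 2 * m := by
  induction p with
  | nil => exact ⟨0, by simp⟩
  | cons h _ ih =>
    obtain ⟨m, hm⟩ := ih
    rcases hf _ _ h with h' | h'
    · exact ⟨m, by push_cast [length_cons, hm, h']; ring⟩
    · exact ⟨m + 1, by push_cast [length_cons, hm, h']; ring⟩

end SimpleGraph.Walk

namespace OMvVert

variable {n : ℕ} {M : Fin n → Fin n → Prop} {u v : Fin n → Prop}

def level : OMvVert n → ℤ
  | w0 => 0
  | a _ => 1
  | b _ => 2
  | w1 => 3

theorem level_eq_of_adj {x y : OMvVert n} (h : (omvGraph n M u v).Adj x y) :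
    y.level = x.level + 1 ∨ y.level = x.level - 1 := by
  rw [omvGraph, SimpleGraph.fromRel_adj] at h
  obtain ⟨-, h | h⟩ := h <;>
    rcases h with ⟨j, rfl, rfl, -⟩ | ⟨j, k, rfl, rfl, -⟩ | ⟨k, rfl, rfl, -⟩ <;>
    simp [level]

end OMvVert

section

open OMvVert

variable {n : ℕ} {M : Fin n → Fin n → Prop} {u v : Fin n → Prop}

@[simp] theorem omvGraph_adj_w0 {y : OMvVert n} :
    (omvGraph n M u v).Adj w0 y ↔ ∃ j, y = a j ∧ u j := by
  cases y <;> simp [omvGraph, omvRel]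

@[simp] theorem omvGraph_adj_w1 {x : OMvVert n} :
    (omvGraph n M u v).Adj x w1 ↔ ∃ k, x = b k ∧ v k := by
  cases x <;> simp [omvGraph, omvRel]

@[simp] theorem omvGraph_adj_a_b {j k : Fin n} :
    (omvGraph n M u v).Adj (a j) (b k) ↔ M j k := by
  simp [omvGraph, omvRel]

theorem omvGraph_walk_length (p : (omvGraph n M u v).Walk w0 w1) :
    ∃ m : ℕ, p.length = 3 + 2 * m := by
  obtain ⟨m, hm⟩ := p.exists_length_eq_sub_add_two_mul level fun _ _ ↦ level_eq_of_adj
  exact ⟨m, by simp only [level] at hm; omega⟩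

theorem exists_of_omvGraph_walk_length_eq_three :
    ∀ p : (omvGraph n M u v).Walk w0 w1, p.length = 3 → ∃ j k, u j ∧ M j k ∧ v k
  | .cons h₁ (.cons h₂ (.cons h₃ .nil)), _ => by
    obtain ⟨j, rfl, hu⟩ := omvGraph_adj_w0.1 h₁
    obtain ⟨k, rfl, hv⟩ := omvGraph_adj_w1.1 h₃
    exact ⟨j, k, hu, omvGraph_adj_a_b.1 h₂, hv⟩
  | .cons _ (.cons _ (.cons _ (.cons _ _))), h => by simp at h

theorem omvGraph_exists_walk_length_eq_three_iff :
    (∃ p : (omvGraph n M u v).Walk w0 w1, p.length = 3) ↔ ∃ j k, u j ∧ M j k ∧ v k :=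
  ⟨fun ⟨p, hp⟩ ↦ exists_of_omvGraph_walk_length_eq_three p hp, fun ⟨j, k, hu, hM, hv⟩ ↦
    ⟨.cons (omvGraph_adj_w0.2 ⟨j, rfl, hu⟩) (.cons (omvGraph_adj_a_b.2 hM)
      (.cons (omvGraph_adj_w1.2 ⟨k, rfl, hv⟩) .nil)), rfl⟩⟩

end

theorem stmt9_general (n : ℕ) (M : Fin n → Fin n → Prop) (u v : Fin n → Prop) :
    ((∃ p : (omvGraph n M u v).Walk OMvVert.w0 OMvVert.w1, p.length ≤ 4) ↔
      ∃ j k, u j ∧ M j k ∧ v k) ∧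
    ((∃ j k, u j ∧ M j k ∧ v k) →
      (omvGraph n M u v).dist OMvVert.w0 OMvVert.w1 = 3) ∧
    ((¬∃ j k, u j ∧ M j k ∧ v k) →
      ∀ p : (omvGraph n M u v).Walk OMvVert.w0 OMvVert.w1, 5 ≤ p.length) := by
  have short_walk {p : (omvGraph n M u v).Walk OMvVert.w0 OMvVert.w1} (hp : p.length < 5) :
      p.length = 3 := by
    obtain ⟨m, hm⟩ := omvGraph_walk_length p
    omega
  refine ⟨⟨fun ⟨p, hp⟩ ↦ ?_, fun h ↦ ?_⟩, fun h ↦ ?_, fun h p ↦ ?_⟩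
  · exact omvGraph_exists_walk_length_eq_three_iff.1 ⟨p, short_walk (by omega)⟩
  · obtain ⟨p, hp⟩ := omvGraph_exists_walk_length_eq_three_iff.2 h
    exact ⟨p, hp.le.trans (by norm_num)⟩
  · obtain ⟨p, hp⟩ := omvGraph_exists_walk_length_eq_three_iff.2 h
    obtain ⟨q, hq⟩ := p.reachable.exists_walk_length_eq_dist
    obtain ⟨m, hm⟩ := omvGraph_walk_length q
    have := hp ▸ SimpleGraph.dist_le p
    omega
  · by_contra! hp
    exact h (omvGraph_exists_walk_length_eq_three_iff.1 ⟨p, short_walk hp⟩)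

/-- In the OMv gadget, a walk from `w₀` to `w₁` of length at most 4 exists iff
`∃ j k, u j ∧ M j k ∧ v k`; moreover if this holds the distance from `w₀` to `w₁` is 3,
and if it fails every walk from `w₀` to `w₁` has length at least 5. -/
theorem stmt9 (n : ℕ) (hn : 1 ≤ n) (M : Fin n → Fin n → Prop) (u v : Fin n → Prop) :
    ((∃ p : (omvGraph n M u v).Walk OMvVert.w0 OMvVert.w1, p.length ≤ 4) ↔
      ∃ j k, u j ∧ M j k ∧ v k) ∧
    ((∃ j k, u j ∧ M j k ∧ v k) →
      (omvGraph n M u v).dist OMvVert.w0 OMvVert.w1 = 3) ∧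
    ((¬∃ j k, u j ∧ M j k ∧ v k) →
      ∀ p : (omvGraph n M u v).Walk OMvVert.w0 OMvVert.w1, 5 ≤ p.length) :=
  stmt9_general n M u v
end

section
/- In the chained OMv graph, the following are equivalent: (1) there exist indices j, k with u j, M j k, and v k; (2) there exists a walk from w₀ to w_c of length at most 5c − 1. Moreover, if (1) holds then the distance from w₀ to w_c equals 3c, and if (1) fails then every walk from w₀ to w_c has length at least 5c. -/
/-! Every edge changes the weight `w_i ↦ 3i`, `a_j^ℓ ↦ 3ℓ + 1`, `b_k^ℓ ↦ 3ℓ + 2` by at most one,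
so walks from `w₀` to `w_c` have length at least `3c`, attained by repeating `w a_j b_k w` for a
triple with `u j`, `M j k`, `v k`. Without such a triple, put `w_i` at `5i`, `a_j^ℓ` at `5ℓ + 1` if
`u j` and at `5ℓ + 3` otherwise, `b_k^ℓ` at `5ℓ + 4` if `v k` and at `5ℓ + 2` otherwise: an edge
could only jump by more than one from `5ℓ + 1` to `5ℓ + 4`, that is, along a triple. Hence walks
then have length at least `5c`. -/

/-- Vertices of the chained OMv graph: `w₀,…,w_c` and, for each of the `c` gadget copies,
the `a`-side and `b`-side vertices. -/
inductive ChainVert (n c : ℕ) : Type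
  | w : Fin (c + 1) → ChainVert n c
  | a : Fin c → Fin n → ChainVert n c
  | b : Fin c → Fin n → ChainVert n c

/-- One direction of each edge of the chained OMv graph: gadget copy `ℓ : Fin c` plays the
role of `Γ_{ℓ+1}`, so its `a`-side is joined to `w_ℓ` and its `b`-side to `w_{ℓ+1}`. -/
def chainRel (n c : ℕ) (M : Fin n → Fin n → Prop) (u v : Fin n → Prop) :
    ChainVert n c → ChainVert n c → Prop := fun x y =>
  (∃ ℓ j k, x = ChainVert.a ℓ j ∧ y = ChainVert.b ℓ k ∧ M j k) ∨
  (∃ (ℓ : Fin c) (j : Fin n), x = ChainVert.w ℓ.castSucc ∧ y = ChainVert.a ℓ j ∧ u j) ∨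
  (∃ (ℓ : Fin c) (k : Fin n), x = ChainVert.b ℓ k ∧ y = ChainVert.w ℓ.succ ∧ v k)

/-- The chained OMv graph. -/
def chainGraph (n c : ℕ) (M : Fin n → Fin n → Prop) (u v : Fin n → Prop) :
    SimpleGraph (ChainVert n c) :=
  SimpleGraph.fromRel (chainRel n c M u v)

theorem SimpleGraph.Walk.le_add_length {V : Type*} {G : SimpleGraph V} (f : V → ℕ)
    (hf : ∀ x y, G.Adj x y → f y ≤ f x + 1) {x y : V} (p : G.Walk x y) :
    f y ≤ f x + p.length := by
  induction p with
  | nil => simp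
  | cons h _ ih =>
    rw [SimpleGraph.Walk.length_cons]
    have := hf _ _ h
    omega

namespace ChainVert

variable {n c : ℕ}

def weight (s : ℕ) (α β : Fin n → ℕ) : ChainVert n c → ℕ
  | w i => s * i
  | a ℓ j => s * ℓ + α j
  | b ℓ k => s * ℓ + β k

end ChainVert

section chainGraph

open ChainVert

variable {n c : ℕ} {M : Fin n → Fin n → Prop} {u v : Fin n → Prop}

theorem chainGraph.adj_induction {P : ChainVert n c → ChainVert n c → Prop}
    (symm : ∀ x y, P x y → P y x)
    (hab : ∀ ℓ j k, M j k → P (a ℓ j) (b ℓ k))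
    (hwa : ∀ ℓ j, u j → P (w ℓ.castSucc) (a ℓ j))
    (hbw : ∀ ℓ k, v k → P (b ℓ k) (w ℓ.succ)) :
    ∀ x y, (chainGraph n c M u v).Adj x y → P x y := by
  have hrel : ∀ x y, chainRel n c M u v x y → P x y := by
    rintro x y (⟨ℓ, j, k, rfl, rfl, h⟩ | ⟨ℓ, j, rfl, rfl, h⟩ | ⟨ℓ, k, rfl, rfl, h⟩)
    exacts [hab ℓ j k h, hwa ℓ j h, hbw ℓ k h]
  rintro x y ⟨-, h | h⟩
  exacts [hrel x y h, symm _ _ (hrel y x h)]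

theorem chainGraph.mul_le_length {s : ℕ} {α β : Fin n → ℕ}
    (hα : ∀ j, u j → α j ≤ 1)
    (hαβ : ∀ j k, M j k → α j ≤ β k + 1 ∧ β k ≤ α j + 1)
    (hβ : ∀ k, v k → s ≤ β k + 1 ∧ β k ≤ s + 1)
    (p : (chainGraph n c M u v).Walk (w 0) (w (Fin.last c))) :
    s * c ≤ p.length := by
  have hadj := chainGraph.adj_induction
    (P := fun x y : ChainVert n c =>
      weight s α β x ≤ weight s α β y + 1 ∧ weight s α β y ≤ weight s α β x + 1)
    (fun _ _ => And.symm)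
    (fun ℓ j k h => by simp only [weight]; have := hαβ j k h; omega)
    (fun ℓ j h => by simp only [weight, Fin.val_castSucc]; have := hα j h; omega)
    (fun ℓ k h => by
      simp only [weight, Fin.val_succ, Nat.mul_succ]; have := hβ k h; omega)
  simpa [weight] using p.le_add_length (weight s α β) fun x y h => (hadj x y h).2

theorem chainGraph.three_mul_le_length
    (p : (chainGraph n c M u v).Walk (w 0) (w (Fin.last c))) : 3 * c ≤ p.length :=
  chainGraph.mul_le_length (α := fun _ => 1) (β := fun _ => 2)
    (fun _ _ => le_rfl) (fun _ _ _ => by omega) (fun _ _ => by omega) p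

theorem chainGraph.five_mul_le_length (h : ¬∃ j k, u j ∧ M j k ∧ v k)
    (p : (chainGraph n c M u v).Walk (w 0) (w (Fin.last c))) : 5 * c ≤ p.length := by
  classical
  refine chainGraph.mul_le_length (α := fun j => if u j then 1 else 3)
    (β := fun k => if v k then 4 else 2) (fun j hj => by simp [hj]) (fun j k hM => ?_)
    (fun k hk => by simp [hk]) p
  have : ¬(u j ∧ v k) := fun ⟨hu, hv⟩ => h ⟨j, k, hu, hM, hv⟩
  split_ifs <;> simp_all

theorem chainGraph.exists_walk_length_eq {j k : Fin n} (hu : u j) (hM : M j k) (hv : v k)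
    (i : Fin (c + 1)) :
    ∃ p : (chainGraph n c M u v).Walk (w 0) (w i), p.length = 3 * i := by
  induction i using Fin.induction with
  | zero => exact ⟨.nil, rfl⟩
  | succ ℓ ih =>
    obtain ⟨p, hp⟩ := ih
    have hwa : (chainGraph n c M u v).Adj (w ℓ.castSucc) (a ℓ j) :=
      ⟨nofun, .inl (.inr (.inl ⟨ℓ, j, rfl, rfl, hu⟩))⟩
    have hab : (chainGraph n c M u v).Adj (a ℓ j) (b ℓ k) :=
      ⟨nofun, .inl (.inl ⟨ℓ, j, k, rfl, rfl, hM⟩)⟩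
    have hbw : (chainGraph n c M u v).Adj (b ℓ k) (w ℓ.succ) :=
      ⟨nofun, .inl (.inr (.inr ⟨ℓ, k, rfl, rfl, hv⟩))⟩
    refine ⟨p.append (.cons hwa (.cons hab (.cons hbw .nil))), ?_⟩
    simp only [SimpleGraph.Walk.length_append, SimpleGraph.Walk.length_cons,
      SimpleGraph.Walk.length_nil, hp, Fin.val_castSucc, Fin.val_succ]
    ring

end chainGraph

theorem stmt10_general (n c : ℕ) (hc : 1 ≤ c)
    (M : Fin n → Fin n → Prop) (u v : Fin n → Prop) :
    ((∃ p : (chainGraph n c M u v).Walk (ChainVert.w 0) (ChainVert.w (Fin.last c)),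
        p.length ≤ 5 * c - 1) ↔
      ∃ j k, u j ∧ M j k ∧ v k) ∧
    ((∃ j k, u j ∧ M j k ∧ v k) →
      (chainGraph n c M u v).dist (ChainVert.w 0) (ChainVert.w (Fin.last c)) = 3 * c) ∧
    ((¬∃ j k, u j ∧ M j k ∧ v k) →
      ∀ p : (chainGraph n c M u v).Walk (ChainVert.w 0) (ChainVert.w (Fin.last c)),
        5 * c ≤ p.length) := by
  have short_walk : (∃ j k, u j ∧ M j k ∧ v k) →
      ∃ p : (chainGraph n c M u v).Walk (ChainVert.w 0) (ChainVert.w (Fin.last c)),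
        p.length = 3 * c := by
    rintro ⟨j, k, hu, hM, hv⟩
    simpa using chainGraph.exists_walk_length_eq hu hM hv (Fin.last c)
  refine ⟨⟨fun ⟨p, hp⟩ => ?_, fun h => ?_⟩, fun h => ?_, chainGraph.five_mul_le_length⟩
  · by_contra h
    have := chainGraph.five_mul_le_length h p
    omega
  · obtain ⟨p, hp⟩ := short_walk h
    exact ⟨p, by omega⟩
  · obtain ⟨p, hp⟩ := short_walk h
    obtain ⟨q, hq⟩ := p.reachable.exists_walk_length_eq_dist
    exact le_antisymm (hp ▸ SimpleGraph.dist_le p) (hq ▸ chainGraph.three_mul_le_length q)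

/-- In the chained OMv graph: a walk from `w₀` to `w_c` of length at most `5c − 1` exists iff
`∃ j k, u j ∧ M j k ∧ v k`; if this holds the distance from `w₀` to `w_c` is `3c`, and if it
fails every walk from `w₀` to `w_c` has length at least `5c`. -/
theorem stmt10 (n c : ℕ) (hn : 1 ≤ n) (hc : 1 ≤ c)
    (M : Fin n → Fin n → Prop) (u v : Fin n → Prop) :
    ((∃ p : (chainGraph n c M u v).Walk (ChainVert.w 0) (ChainVert.w (Fin.last c)),
        p.length ≤ 5 * c - 1) ↔
      ∃ j k, u j ∧ M j k ∧ v k) ∧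
    ((∃ j k, u j ∧ M j k ∧ v k) →
      (chainGraph n c M u v).dist (ChainVert.w 0) (ChainVert.w (Fin.last c)) = 3 * c) ∧
    ((¬∃ j k, u j ∧ M j k ∧ v k) →
      ∀ p : (chainGraph n c M u v).Walk (ChainVert.w 0) (ChainVert.w (Fin.last c)),
        5 * c ≤ p.length) :=
  stmt10_general n c hc M u v
end

section
/- (Correctness of the incremental OMv construction at the end of phase i.) In the graph G_i, there exists a walk from the vertex z_1 of P_0 to the vertex y_1 of P_{β+1} of length strictly less than 4(β+1) + (β+2)(2n−2i) + 2(i−1) if and only if there exist indices j, k with u^i j, M j k, and v^i k. -/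
/-- Vertices of the incremental OMv graph: `β+2` paths `P_0,…,P_{β+1}`, each with `2n−1`
vertices (path vertex `t` of `P_ℓ` is `z_{t+1}` for `t ≤ n−1` and `y_{2n−1−t}` in general,
so `z_s` has index `s−1` and `y_s` has index `2n−1−s`), together with `β+1` gadget copies
`Γ_1,…,Γ_{β+1}` (copy `ℓ : Fin (β+1)` plays the role of `Γ_{ℓ+1}`). -/
inductive IncVert (n β : ℕ) : Type
  | p : Fin (β + 2) → Fin (2 * n - 1) → IncVert n β
  | a : Fin (β + 1) → Fin n → IncVert n β
  | b : Fin (β + 1) → Fin n → IncVert n β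

/-- One direction of each edge of the incremental OMv graph after phase `i`:
consecutive path edges; gadget edges `{a_j^ℓ, b_k^ℓ}` iff `M j k`; and, for each phase
`1 ≤ s ≤ i`, edges `{y_s of P_{ℓ−1}, a_j^ℓ}` iff `u^s j` and `{b_k^ℓ, z_s of P_ℓ}` iff
`v^s k`. -/
def incRel (n β i : ℕ) (M : Fin n → Fin n → Prop) (u v : ℕ → Fin n → Prop) :
    IncVert n β → IncVert n β → Prop := fun x y =>
  (∃ (ℓ : Fin (β + 2)) (t₁ t₂ : Fin (2 * n - 1)),
    x = IncVert.p ℓ t₁ ∧ y = IncVert.p ℓ t₂ ∧ (t₁ : ℕ) + 1 = (t₂ : ℕ)) ∨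
  (∃ (ℓ : Fin (β + 1)) (j k : Fin n), x = IncVert.a ℓ j ∧ y = IncVert.b ℓ k ∧ M j k) ∨
  (∃ (s : ℕ) (ℓ : Fin (β + 1)) (j : Fin n) (t : Fin (2 * n - 1)),
    1 ≤ s ∧ s ≤ i ∧ (t : ℕ) = 2 * n - 1 - s ∧
    x = IncVert.p ℓ.castSucc t ∧ y = IncVert.a ℓ j ∧ u s j) ∨
  (∃ (s : ℕ) (ℓ : Fin (β + 1)) (k : Fin n) (t : Fin (2 * n - 1)),
    1 ≤ s ∧ s ≤ i ∧ (t : ℕ) = s - 1 ∧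
    x = IncVert.b ℓ k ∧ y = IncVert.p ℓ.succ t ∧ v s k)

/-- The incremental OMv graph `G_i` at the end of phase `i`. -/
def incGraph (n β i : ℕ) (M : Fin n → Fin n → Prop) (u v : ℕ → Fin n → Prop) :
    SimpleGraph (IncVert n β) :=
  SimpleGraph.fromRel (incRel n β i M u v)

/-!
Compare walk lengths with a potential `φ` on the vertices. If no triple `u^i j, M j k, v^i k`
exists, there is a potential with `φ(z_1 of P_0) = 0` and `φ(y_1 of P_{β+1})` equal to the
length bound which changes by at most one along every edge, so no walk is shorter than the
bound. Conversely, a witness `(j, k)` gives a shortcut `y_i → a_j → b_k → z_i` through every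
gadget, and following the paths between these shortcuts beats the bound by `β + 1`.
-/

namespace SimpleGraph

variable {V : Type*} {G : SimpleGraph V}

theorem Walk.apply_le_apply_add_length {f : V → ℕ} (hf : ∀ ⦃x y⦄, G.Adj x y → f y ≤ f x + 1)
    {u v : V} (p : G.Walk u v) : f v ≤ f u + p.length := by
  induction p with
  | nil => simp
  | cons hadj _ ih =>
    rw [Walk.length_cons]
    have := hf hadj
    omega

theorem edist_le_sub_of_adj_of_val_add_one_eq {m : ℕ} {f : Fin m → V}
    (hf : ∀ s t : Fin m, (s : ℕ) + 1 = t → G.Adj (f s) (f t)) {a b : Fin m} (hab : a ≤ b) :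
    G.edist (f a) (f b) ≤ ((b - a : ℕ) : ℕ∞) := by
  obtain ⟨b, hb⟩ := b
  rw [Fin.le_def] at hab
  induction b with
  | zero =>
    obtain rfl : a = ⟨0, hb⟩ := Fin.ext (by simp at hab; omega)
    simp
  | succ b ih =>
    rcases eq_or_lt_of_le hab with hab | hlt
    · obtain rfl : a = ⟨b + 1, hb⟩ := Fin.ext hab
      simp
    calc G.edist (f a) (f ⟨b + 1, hb⟩)
        ≤ G.edist (f a) (f ⟨b, by omega⟩) + G.edist (f ⟨b, by omega⟩) (f ⟨b + 1, hb⟩) :=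
          G.edist_triangle
      _ ≤ ((b - a : ℕ) : ℕ∞) + 1 := by
          gcongr
          · exact ih (by omega) (by simp at hlt ⊢; omega)
          · exact (edist_eq_one_iff_adj.mpr (hf _ _ rfl)).le
      _ = ((b + 1 - a : ℕ) : ℕ∞) := by
          rw [← Nat.cast_one, ← Nat.cast_add]
          congr 1
          simp at hlt
          omega

theorem exists_walk_length_le_of_edist_le {u v : V} {d : ℕ} (h : G.edist u v ≤ d) :
    ∃ p : G.Walk u v, p.length ≤ d := by
  obtain ⟨p, hp⟩ := exists_walk_of_edist_ne_top (ne_top_of_le_ne_top (ENat.natCast_ne_top d) h)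
  exact ⟨p, by exact_mod_cast hp ▸ h⟩

end SimpleGraph

namespace incGraph

variable {n β i : ℕ} {M : Fin n → Fin n → Prop} {u v : ℕ → Fin n → Prop}

theorem adj_path (ℓ : Fin (β + 2)) {t₁ t₂ : Fin (2 * n - 1)} (h : (t₁ : ℕ) + 1 = t₂) :
    (incGraph n β i M u v).Adj (.p ℓ t₁) (.p ℓ t₂) := by
  refine (SimpleGraph.fromRel_adj _ _ _).mpr ⟨?_, .inl (.inl ⟨ℓ, t₁, t₂, rfl, rfl, h⟩)⟩
  rintro ⟨⟩
  omega

theorem adj_y_a (hi : 1 ≤ i) (ℓ : Fin (β + 1)) {j : Fin n} {t : Fin (2 * n - 1)}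
    (ht : (t : ℕ) = 2 * n - 1 - i) (hu : u i j) :
    (incGraph n β i M u v).Adj (.p ℓ.castSucc t) (.a ℓ j) :=
  (SimpleGraph.fromRel_adj _ _ _).mpr
    ⟨nofun, .inl (.inr (.inr (.inl ⟨i, ℓ, j, t, hi, le_rfl, ht, rfl, rfl, hu⟩)))⟩

theorem adj_a_b (ℓ : Fin (β + 1)) {j k : Fin n} (hM : M j k) :
    (incGraph n β i M u v).Adj (.a ℓ j) (.b ℓ k) :=
  (SimpleGraph.fromRel_adj _ _ _).mpr ⟨nofun, .inl (.inr (.inl ⟨ℓ, j, k, rfl, rfl, hM⟩))⟩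

theorem adj_b_z (hi : 1 ≤ i) (ℓ : Fin (β + 1)) {k : Fin n} {t : Fin (2 * n - 1)}
    (ht : (t : ℕ) = i - 1) (hv : v i k) :
    (incGraph n β i M u v).Adj (.b ℓ k) (.p ℓ.succ t) :=
  (SimpleGraph.fromRel_adj _ _ _).mpr
    ⟨nofun, .inl (.inr (.inr (.inr ⟨i, ℓ, k, t, hi, le_rfl, ht, rfl, rfl, hv⟩)))⟩

theorem edist_path_le (ℓ : Fin (β + 2)) (t₁ t₂ : Fin (2 * n - 1)) (h : t₁ ≤ t₂) :
    (incGraph n β i M u v).edist (.p ℓ t₁) (.p ℓ t₂) ≤ ((t₂ - t₁ : ℕ) : ℕ∞) :=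
  SimpleGraph.edist_le_sub_of_adj_of_val_add_one_eq (fun _ _ ↦ adj_path ℓ) h

theorem edist_y_castSucc_y_succ_le (hi : 1 ≤ i) (hin : i ≤ n) {j k : Fin n}
    (hu : u i j) (hM : M j k) (hv : v i k) (ℓ : Fin (β + 1)) :
    (incGraph n β i M u v).edist (.p ℓ.castSucc ⟨2 * n - 1 - i, by omega⟩)
      (.p ℓ.succ ⟨2 * n - 1 - i, by omega⟩) ≤ ((2 * n - 2 * i + 3 : ℕ) : ℕ∞) := by
  let G := incGraph n β i M u v
  have hya : G.Adj (.p ℓ.castSucc ⟨2 * n - 1 - i, by omega⟩) (.a ℓ j) := adj_y_a hi ℓ rfl hu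
  have hbz : G.Adj (.b ℓ k) (.p ℓ.succ ⟨i - 1, by omega⟩) := adj_b_z hi ℓ rfl hv
  calc G.edist (.p ℓ.castSucc ⟨2 * n - 1 - i, by omega⟩) (.p ℓ.succ ⟨2 * n - 1 - i, by omega⟩)
      ≤ G.edist (.p ℓ.castSucc ⟨2 * n - 1 - i, by omega⟩) (.p ℓ.succ ⟨i - 1, by omega⟩) +
          G.edist (.p ℓ.succ ⟨i - 1, by omega⟩) (.p ℓ.succ ⟨2 * n - 1 - i, by omega⟩) :=
        G.edist_triangle
    _ ≤ ((3 : ℕ) : ℕ∞) + ((2 * n - 1 - i - (i - 1) : ℕ) : ℕ∞) := by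
        gcongr
        · exact SimpleGraph.edist_le (.cons hya (.cons (adj_a_b ℓ hM) hbz.toWalk))
        · exact edist_path_le _ _ _ (Fin.le_def.mpr (by simp only; omega))
    _ = ((2 * n - 2 * i + 3 : ℕ) : ℕ∞) := by
        rw [← Nat.cast_add]
        congr 1
        omega

theorem edist_y_le (hi : 1 ≤ i) (hin : i ≤ n) {j k : Fin n}
    (hu : u i j) (hM : M j k) (hv : v i k) (ℓ : Fin (β + 2)) :
    (incGraph n β i M u v).edist (.p 0 ⟨2 * n - 1 - i, by omega⟩)
      (.p ℓ ⟨2 * n - 1 - i, by omega⟩) ≤ ((ℓ * (2 * n - 2 * i + 3) : ℕ) : ℕ∞) := by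
  induction ℓ using Fin.induction with
  | zero => simp
  | succ ℓ ih =>
    calc _ ≤ _ := (incGraph n β i M u v).edist_triangle
      _ ≤ ((ℓ * (2 * n - 2 * i + 3) : ℕ) : ℕ∞) + ((2 * n - 2 * i + 3 : ℕ) : ℕ∞) :=
          add_le_add ih (edist_y_castSucc_y_succ_le hi hin hu hM hv ℓ)
      _ = _ := by
          rw [← Nat.cast_add, Fin.val_succ, add_one_mul]

theorem edist_z_one_y_one_le (hi : 1 ≤ i) (hin : i ≤ n) {j k : Fin n}
    (hu : u i j) (hM : M j k) (hv : v i k) :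
    (incGraph n β i M u v).edist (.p 0 ⟨0, by omega⟩) (.p (Fin.last (β + 1)) ⟨2 * n - 2, by omega⟩)
      ≤ ((2 * n - 1 - i + (β + 1) * (2 * n - 2 * i + 3) + (i - 1) : ℕ) : ℕ∞) := by
  let G := incGraph n β i M u v
  let y : Fin (2 * n - 1) := ⟨2 * n - 1 - i, by omega⟩
  calc G.edist (.p 0 ⟨0, by omega⟩) (.p (Fin.last (β + 1)) ⟨2 * n - 2, by omega⟩)
      ≤ G.edist (.p 0 ⟨0, by omega⟩) (.p 0 y) + G.edist (.p 0 y) (.p (Fin.last (β + 1)) y) +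
          G.edist (.p (Fin.last (β + 1)) y) (.p (Fin.last (β + 1)) ⟨2 * n - 2, by omega⟩) :=
        G.edist_triangle.trans (add_le_add_left G.edist_triangle _)
    _ ≤ ((2 * n - 1 - i : ℕ) : ℕ∞) + (((β + 1) * (2 * n - 2 * i + 3) : ℕ) : ℕ∞) +
          ((i - 1 : ℕ) : ℕ∞) := by
        gcongr
        · exact edist_path_le _ _ _ (Fin.le_def.mpr (Nat.zero_le _))
        · exact edist_y_le hi hin hu hM hv _
        · refine (edist_path_le _ y ⟨2 * n - 2, by omega⟩ (Fin.le_def.mpr ?_)).trans_eq ?_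
          · exact Nat.sub_le_sub_left hi _
          · congr 1
            simp only [y]
            omega
    _ = _ := by push_cast; rfl

end incGraph

section Potential

variable {n β i : ℕ} {M : Fin n → Fin n → Prop} {u v : ℕ → Fin n → Prop}

-- Vertex `t` of `P_ℓ` sits at level `ℓ(2n−2i+4) + t`, clamped so that the edges of the phases
-- `s < i` give no shortcut; `a_j` lies one above `y_i` iff `u^i j`, and `b_k` one below `z_i` of
-- the next path iff `v^i k`.
open Classical in
noncomputable def incPotential (n β i : ℕ) (u v : ℕ → Fin n → Prop) : IncVert n β → ℕ
  | .p ℓ t => ℓ * (2 * n - 2 * i + 4) +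
      if (ℓ : ℕ) = 0 then min (t : ℕ) (2 * n - i)
      else if (ℓ : ℕ) = β + 1 then max (t : ℕ) (i - 2)
      else max (min (t : ℕ) (2 * n - i)) (i - 2)
  | .a ℓ j => ℓ * (2 * n - 2 * i + 4) + (2 * n - i) + if u i j then 0 else 1
  | .b ℓ k => ℓ * (2 * n - 2 * i + 4) + (2 * n - i) + if v i k then 2 else 1

theorem incPotential_le_add_one_of_incRel (hin : i ≤ n) (hno : ∀ j k, u i j → M j k → ¬ v i k)
    {x y : IncVert n β} (h : incRel n β i M u v x y) :
    incPotential n β i u v y ≤ incPotential n β i u v x + 1 ∧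
      incPotential n β i u v x ≤ incPotential n β i u v y + 1 := by
  rcases h with ⟨ℓ, t₁, t₂, rfl, rfl, ht⟩ | ⟨ℓ, j, k, rfl, rfl, hM⟩ |
    ⟨s, ℓ, j, t, hs1, hsi, ht, rfl, rfl, hu⟩ | ⟨s, ℓ, k, t, hs1, hsi, ht, rfl, rfl, hv⟩
  · simp only [incPotential]
    split_ifs <;> omega
  · have := hno j k
    simp only [incPotential]
    split_ifs <;> tauto
  · have := ℓ.isLt
    rcases eq_or_ne s i with rfl | hs
    · simp only [incPotential, Fin.val_castSucc, hu, if_true]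
      split_ifs <;> omega
    · simp only [incPotential, Fin.val_castSucc]
      split_ifs <;> omega
  · rcases eq_or_ne s i with rfl | hs
    · simp only [incPotential, Fin.val_succ, add_one_mul, Nat.add_one_ne_zero, if_false, hv,
        if_true]
      split_ifs <;> omega
    · simp only [incPotential, Fin.val_succ, add_one_mul, Nat.add_one_ne_zero, if_false]
      split_ifs <;> omega

theorem incPotential_adj (hin : i ≤ n) (hno : ∀ j k, u i j → M j k → ¬ v i k) ⦃x y : IncVert n β⦄
    (h : (incGraph n β i M u v).Adj x y) :
    incPotential n β i u v y ≤ incPotential n β i u v x + 1 := by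
  obtain ⟨-, h | h⟩ := (SimpleGraph.fromRel_adj _ _ _).mp h
  · exact (incPotential_le_add_one_of_incRel hin hno h).1
  · exact (incPotential_le_add_one_of_incRel hin hno h).2

end Potential

/-- Correctness of the incremental OMv construction at the end of phase `i`: in `G_i` there
is a walk from `z_1` of `P_0` to `y_1` of `P_{β+1}` of length strictly less than
`4(β+1) + (β+2)(2n−2i) + 2(i−1)` iff `∃ j k, u^i j ∧ M j k ∧ v^i k`. -/
theorem stmt11 (n β i : ℕ) (hn : 1 ≤ n) (hi1 : 1 ≤ i) (hin : i ≤ n)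
    (M : Fin n → Fin n → Prop) (u v : ℕ → Fin n → Prop) :
    (∃ p : (incGraph n β i M u v).Walk
        (IncVert.p 0 ⟨0, by omega⟩)
        (IncVert.p (Fin.last (β + 1)) ⟨2 * n - 2, by omega⟩),
      p.length < 4 * (β + 1) + (β + 2) * (2 * n - 2 * i) + 2 * (i - 1)) ↔
    ∃ j k, u i j ∧ M j k ∧ v i k := by
  obtain ⟨w, hw⟩ : ∃ w, 2 * n - 2 * i = w := ⟨_, rfl⟩
  constructor
  · rintro ⟨p, hp⟩
    by_contra! hno
    have hpot := p.apply_le_apply_add_length (incPotential_adj hin hno)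
    simp only [incPotential, Fin.val_zero, Fin.val_last, Nat.add_one_ne_zero, if_true, if_false,
      zero_mul] at hpot
    rw [hw] at hpot hp
    have : (β + 1) * (w + 4) = (β + 1) * w + 4 * (β + 1) := by ring
    have : (β + 2) * w = (β + 1) * w + w := by ring
    omega
  · rintro ⟨j, k, hu, hM, hv⟩
    obtain ⟨p, hp⟩ := SimpleGraph.exists_walk_length_le_of_edist_le
      (incGraph.edist_z_one_y_one_le hi1 hin hu hM hv)
    refine ⟨p, hp.trans_lt ?_⟩
    rw [hw]
    have : (β + 1) * (w + 3) = (β + 1) * w + 3 * (β + 1) := by ring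
    have : (β + 2) * w = (β + 1) * w + w := by ring
    omega
end

section
/- Let x ∈ V with χ(x) = 0. In the layered k-cycle gadget L, every walk from (0,x) to (k,x) has length at least k, and there exists such a walk of length at most k+1 if and only if there exist vertices v_0 = x, v_1, …, v_{k−1} ∈ V with χ(v_ℓ) = ℓ for all ℓ, (v_ℓ, v_{ℓ+1}) ∈ E for all ℓ < k−1, and (v_{k−1}, v_0) ∈ E (such vertices are pairwise distinct since their colors differ, so they form a directed k-cycle through x that is colorful for χ); in that case the minimum length of such a walk is exactly k. -/
/-- Vertices of the layered `k`-cycle gadget: pairs `(ℓ, x)` with `ℓ ∈ {0,…,k}` and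
`χ(x) = ℓ` if `ℓ < k`, `χ(x) = 0` if `ℓ = k` (equivalently, `(χ x : ℕ) = ℓ % k`). -/
def LayerVert {V : Type*} (k : ℕ) (χ : V → Fin k) : Type _ :=
  {q : Fin (k + 1) × V // ((χ q.2 : ℕ) = (q.1 : ℕ) % k)}

/-- One direction of each edge of the layered gadget: `(ℓ, x) — (ℓ+1, y)` iff `(x,y) ∈ E`. -/
def layerRel {V : Type*} (E : Set (V × V)) (k : ℕ) (χ : V → Fin k)
    (x y : LayerVert k χ) : Prop :=
  (x.1.1 : ℕ) + 1 = (y.1.1 : ℕ) ∧ (x.1.2, y.1.2) ∈ E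

/-- The layered `k`-cycle gadget. -/
def layerGraph {V : Type*} (E : Set (V × V)) (k : ℕ) (χ : V → Fin k) :
    SimpleGraph (LayerVert k χ) :=
  SimpleGraph.fromRel (layerRel E k χ)

/-- `x` lies on a directed `k`-cycle that is colorful for `χ`, with the colors in cyclic
order `0,1,…,k−1` starting at `x`. -/
def HasColorfulCycle {V : Type*} (E : Set (V × V)) (k : ℕ) (hk : 2 ≤ k)
    (χ : V → Fin k) (x : V) : Prop :=
  ∃ v : Fin k → V, v ⟨0, by omega⟩ = x ∧ (∀ ℓ, χ (v ℓ) = ℓ) ∧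
    ∀ ℓ : Fin k, (v ℓ, v (ℓ + ⟨1, by omega⟩)) ∈ E

/-!
The layer index changes by exactly one along every edge of the gadget. Hence a walk from
`(0, x)` to `(k, x)` has length at least `k` and of the same parity as `k`, so one of length at
most `k + 1` has length exactly `k`; it then climbs one layer per step, and the `V`-components of
its first `k` vertices form a colorful cycle through `x`. Conversely a colorful cycle
`v₀, …, v_{k-1}` lifts to the walk `(0, v₀), (1, v₁), …, (k - 1, v_{k-1}), (k, v₀)`.
-/

namespace SimpleGraph

variable {W : Type*} {G : SimpleGraph W} {u v : W}

def IsLayering (G : SimpleGraph W) (f : W → ℕ) : Prop :=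
  ∀ ⦃u v⦄, G.Adj u v → f v = f u + 1 ∨ f u = f v + 1

namespace IsLayering

variable {f : W → ℕ}

theorem le_add_length (hf : G.IsLayering f) (p : G.Walk u v) : f v ≤ f u + p.length := by
  induction p with
  | nil => simp
  | cons h _ ih => rcases hf h with h' | h' <;> simp only [Walk.length_cons] <;> omega

theorem even_length_add_add (hf : G.IsLayering f) (p : G.Walk u v) :
    Even (p.length + f u + f v) := by
  induction p with
  | nil => simp
  | cons h _ ih =>
    rw [Nat.even_iff] at ih ⊢
    rcases hf h with h' | h' <;> simp only [Walk.length_cons] <;> omega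

theorem apply_getVert (hf : G.IsLayering f) (p : G.Walk u v) (hp : f v = f u + p.length)
    {i : ℕ} (hi : i ≤ p.length) : f (p.getVert i) = f u + i := by
  have h₁ := hf.le_add_length (p.take i)
  have h₂ := hf.le_add_length (p.drop i)
  simp only [Walk.take_length, Walk.drop_length] at h₁ h₂
  omega

end IsLayering

theorem exists_walk_length_eq_of_forall_adj (g : ℕ → W) (n : ℕ)
    (h : ∀ i < n, G.Adj (g i) (g (i + 1))) : ∃ p : G.Walk (g 0) (g n), p.length = n := by
  induction n with
  | zero => exact ⟨.nil, rfl⟩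
  | succ n ih =>
    obtain ⟨p, hp⟩ := ih fun i hi => h i (by omega)
    exact ⟨p.concat (h n (by omega)), by simp [hp]⟩

theorem dist_eq_length_of_forall_le (p : G.Walk u v)
    (h : ∀ q : G.Walk u v, p.length ≤ q.length) : G.dist u v = p.length := by
  obtain ⟨q, hq⟩ := Reachable.exists_walk_length_eq_dist ⟨p⟩
  exact le_antisymm (dist_le p) (hq ▸ h q)

end SimpleGraph

namespace LayerVert

variable {V : Type*} {E : Set (V × V)} {k : ℕ} {χ : V → Fin k} {x : V}

def layer (q : LayerVert k χ) : ℕ := q.1.1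

def bottom (hx : (χ x : ℕ) = 0) : LayerVert k χ := ⟨(0, x), by simpa using hx⟩

def top (hx : (χ x : ℕ) = 0) : LayerVert k χ :=
  ⟨(Fin.last k, x), by simpa [Nat.mod_self] using hx⟩

@[simp]
theorem layer_bottom (hx : (χ x : ℕ) = 0) : (bottom hx).layer = 0 := rfl

@[simp]
theorem layer_top (hx : (χ x : ℕ) = 0) : (top hx).layer = k := rfl

theorem isLayering_layer : (layerGraph E k χ).IsLayering layer := by
  rintro u v ⟨-, h | h⟩
  · exact .inl h.1.symm
  · exact .inr h.1.symm

theorem mem_of_adj {u v : LayerVert k χ} (h : (layerGraph E k χ).Adj u v)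
    (hl : v.layer = u.layer + 1) : (u.1.2, v.1.2) ∈ E := by
  rcases h with ⟨-, h | h⟩
  · exact h.2
  · have := h.1
    simp only [layer] at hl
    omega

theorem adj_of_mem {u v : LayerVert k χ} (hl : v.layer = u.layer + 1)
    (hE : (u.1.2, v.1.2) ∈ E) : (layerGraph E k χ).Adj u v :=
  ⟨fun h => by simp [h] at hl, .inl ⟨hl.symm, hE⟩⟩

variable (hx : (χ x : ℕ) = 0)

theorem le_length_of_walk (p : (layerGraph E k χ).Walk (bottom hx) (top hx)) :
    k ≤ p.length := by
  simpa using isLayering_layer.le_add_length p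

theorem length_eq_of_walk (p : (layerGraph E k χ).Walk (bottom hx) (top hx))
    (hp : p.length ≤ k + 1) : p.length = k := by
  obtain ⟨m, hm⟩ := isLayering_layer.even_length_add_add p
  rw [layer_bottom, layer_top] at hm
  have := le_length_of_walk hx p
  omega

theorem hasColorfulCycle_of_walk (hk : 2 ≤ k) (p : (layerGraph E k χ).Walk (bottom hx) (top hx))
    (hp : p.length = k) : HasColorfulCycle E k hk χ x := by
  have hlayer : ∀ i ≤ k, (p.getVert i).layer = i := fun i hi => by
    simpa using isLayering_layer.apply_getVert p (by simp [hp]) (by omega)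
  have hedge : ∀ i < k, ((p.getVert i).1.2, (p.getVert (i + 1)).1.2) ∈ E := fun i hi =>
    mem_of_adj (p.adj_getVert_succ (by omega)) (by rw [hlayer i hi.le, hlayer (i + 1) hi])
  refine ⟨fun ℓ => (p.getVert ℓ).1.2, by simp only [SimpleGraph.Walk.getVert_zero]; rfl,
    fun ℓ => Fin.ext ?_, fun ℓ => ?_⟩
  · rw [(p.getVert ℓ).2, ← layer, hlayer ℓ ℓ.2.le, Nat.mod_eq_of_lt ℓ.2]
  · rcases (Nat.succ_le_of_lt ℓ.2).lt_or_eq with hlt | heq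
    · have hsucc : ((ℓ + ⟨1, by omega⟩ : Fin k) : ℕ) = ℓ + 1 := by
        simp [Fin.val_add, Nat.mod_eq_of_lt hlt]
      simpa only [hsucc] using hedge ℓ ℓ.2
    · have hsucc : ((ℓ + ⟨1, by omega⟩ : Fin k) : ℕ) = 0 := by
        simp [Fin.val_add, show (ℓ : ℕ) + 1 = k from heq]
      have hend : p.getVert (ℓ + 1) = top hx := p.getVert_of_length_le (by omega)
      have h := hedge ℓ ℓ.2
      rw [hend] at h
      simp only [hsucc, SimpleGraph.Walk.getVert_zero]
      exact h

open Fin.NatCast in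
theorem exists_walk_of_hasColorfulCycle (hk : 2 ≤ k) (hc : HasColorfulCycle E k hk χ x) :
    ∃ p : (layerGraph E k χ).Walk (bottom hx) (top hx), p.length = k := by
  obtain ⟨v, hv₀, hχ, hE⟩ := hc
  have : NeZero k := ⟨by omega⟩
  have hone : (⟨1, by omega⟩ : Fin k) = 1 :=
    Fin.ext (by simp [Nat.mod_eq_of_lt (by omega : 1 < k)])
  -- `g i = (i mod (k + 1), v_{i mod (k + 1) mod k})`: the reductions make `g` total on `ℕ`.
  let g : ℕ → LayerVert k χ := fun i =>
    ⟨((i : Fin (k + 1)), v ((i : Fin (k + 1)) : ℕ)), by simp [hχ]⟩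
  have hg : ∀ i ≤ k, (g i).layer = i ∧ (g i).1.2 = v i := fun i hi => by
    simp [g, layer, Nat.mod_eq_of_lt (Nat.lt_succ_of_le hi)]
  have hg₀ : g 0 = bottom hx := by
    refine Subtype.ext (Prod.ext ?_ ?_) <;>
      simp only [Nat.cast_zero, Fin.coe_ofNat_eq_mod, Nat.zero_mod, bottom, g]
    exact hv₀
  have hgk : g k = top hx := by
    refine Subtype.ext (Prod.ext ?_ ?_) <;>
      simp only [Fin.natCast_eq_last, Fin.val_last, Fin.natCast_self, top, g]
    exact hv₀
  obtain ⟨p, hp⟩ := SimpleGraph.exists_walk_length_eq_of_forall_adj (G := layerGraph E k χ) g k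
    fun i hi => adj_of_mem (by rw [(hg i hi.le).1, (hg (i + 1) hi).1]) (by
      rw [(hg i hi.le).2, (hg (i + 1) hi).2, Nat.cast_succ, ← hone]
      exact hE i)
  exact ⟨p.copy hg₀ hgk, by simpa using hp⟩

end LayerVert

/-- In the layered `k`-cycle gadget, every walk from `(0,x)` to `(k,x)` has length at least
`k`; a walk of length at most `k+1` exists iff `x` lies on a colorful directed `k`-cycle;
and in that case the minimum walk length (the distance) is exactly `k`. -/
theorem stmt12 {V : Type*} (E : Set (V × V)) (k : ℕ) (hk : 2 ≤ k)
    (χ : V → Fin k) (x : V) (hx : (χ x : ℕ) = 0) :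
    (∀ p : (layerGraph E k χ).Walk
        ⟨(0, x), by simpa using hx⟩ ⟨(Fin.last k, x), by simpa [Nat.mod_self] using hx⟩,
      k ≤ p.length) ∧
    ((∃ p : (layerGraph E k χ).Walk
        ⟨(0, x), by simpa using hx⟩ ⟨(Fin.last k, x), by simpa [Nat.mod_self] using hx⟩,
      p.length ≤ k + 1) ↔ HasColorfulCycle E k hk χ x) ∧
    (HasColorfulCycle E k hk χ x →
      (layerGraph E k χ).dist
        ⟨(0, x), by simpa using hx⟩ ⟨(Fin.last k, x), by simpa [Nat.mod_self] using hx⟩ = k) := by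
  refine ⟨LayerVert.le_length_of_walk hx, ⟨fun ⟨p, hp⟩ =>
    LayerVert.hasColorfulCycle_of_walk hx hk p (LayerVert.length_eq_of_walk hx p hp),
    fun hc => ?_⟩, fun hc => ?_⟩
  · obtain ⟨p, hp⟩ := LayerVert.exists_walk_of_hasColorfulCycle hx hk hc
    exact ⟨p, hp.trans_le k.le_succ⟩
  · obtain ⟨p, hp⟩ := LayerVert.exists_walk_of_hasColorfulCycle hx hk hc
    exact (SimpleGraph.dist_eq_length_of_forall_le p
      fun q => hp.trans_le (LayerVert.le_length_of_walk hx q)).trans hp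
end

section
/- (Correctness of the fully dynamic k-cycle construction.) In the chained gadget G', there exists a walk from the vertex (0,x) of L₁ to the vertex (k,x) of L_c of length strictly less than (k+2)c − 1 if and only if there exist vertices v_0 = x, v_1, …, v_{k−1} ∈ V with χ(v_ℓ) = ℓ for all ℓ, (v_ℓ, v_{ℓ+1}) ∈ E for all ℓ < k−1, and (v_{k−1}, v_0) ∈ E. Moreover, when this holds the distance between these two vertices equals (k+1)c − 1, and when it fails every such walk has length at least (k+3)c − 1. -/
/-- One direction of each edge of the chained gadget `G'`: edges inside each of the `c`
copies of the layered gadget, together with, for each `m` with `m+1 < c`, a connector edge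
between the vertex `(k, x₀)` of copy `m` and the vertex `(0, x₀)` of copy `m+1`. -/
def chainKRel {V : Type*} (E : Set (V × V)) (k c : ℕ) (χ : V → Fin k) (x₀ : V)
    (x y : Fin c × LayerVert k χ) : Prop :=
  (x.1 = y.1 ∧ layerRel E k χ x.2 y.2) ∨
  ((x.1 : ℕ) + 1 = (y.1 : ℕ) ∧ (x.2.1.1 : ℕ) = k ∧ (y.2.1.1 : ℕ) = 0 ∧
    x.2.1.2 = x₀ ∧ y.2.1.2 = x₀)

/-- The chained gadget `G'`: `c` disjoint copies of the layered `k`-cycle gadget, with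
consecutive copies linked through the vertex `x₀`. -/
def chainKGraph {V : Type*} (E : Set (V × V)) (k c : ℕ) (χ : V → Fin k) (x₀ : V) :
    SimpleGraph (Fin c × LayerVert k χ) :=
  SimpleGraph.fromRel (chainKRel E k c χ x₀)

/-!
Along a walk, a function `f` with `|f u - f v| ≤ 1` across every edge changes by at most the
length of the walk. For `f (m, ℓ, v) = m (k + 1) + ℓ` this gives the lower bound
`(k + 1) c - 1`, attained by running through every copy along the colorful cycle and crossing
to the next copy. Without a colorful cycle through `x`, take `f (m, ℓ, v) = m (k + 3) + ℓ`,
plus `2` when `v` is not the end of a colorful walk of length `ℓ` from `x`. Such ends are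
closed under going up a layer, so `f` still changes by one across every edge, while the vertex
`(k, x)` of every copy now carries the penalty; this gives `(k + 3) c - 1`.
-/

namespace SimpleGraph

variable {α : Type*} {G : SimpleGraph α}

theorem Walk.sub_le_length {a b : α} (p : G.Walk a b) (f : α → ℤ)
    (hf : ∀ u v, G.Adj u v → f v ≤ f u + 1) : f b - f a ≤ p.length := by
  induction p with
  | nil => simp
  | cons h _ ih =>
    have := hf _ _ h
    rw [Walk.length_cons, Nat.cast_succ]
    omega

theorem le_add_one_of_fromRel_adj {r : α → α → Prop} {f : α → ℤ}
    (hf : ∀ a b, r a b → |f b - f a| ≤ 1) {a b : α} (h : (fromRel r).Adj a b) :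
    f b ≤ f a + 1 := by
  rcases h.2 with h | h
  · linarith [le_abs_self (f b - f a), hf a b h]
  · linarith [neg_abs_le (f a - f b), hf b a h]

theorem exists_walk_length_eq_mul (f : ℕ → α) (L n : ℕ)
    (h : ∀ i < n, ∃ p : G.Walk (f i) (f (i + 1)), p.length = L) :
    ∃ p : G.Walk (f 0) (f n), p.length = n * L := by
  induction n with
  | zero => exact ⟨.nil, by simp⟩
  | succ n ih =>
    obtain ⟨p, hp⟩ := ih fun i hi => h i (by omega)
    obtain ⟨q, hq⟩ := h n (by omega)
    exact ⟨p.append q, by rw [Walk.length_append, hp, hq, Nat.succ_mul]⟩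

end SimpleGraph

section ColorfulWalk

variable {V : Type*} (E : Set (V × V)) {k : ℕ} (χ : V → Fin k) (x : V)

def HasColorfulWalk (n : ℕ) (w : V) : Prop :=
  ∃ u : ℕ → V, u 0 = x ∧ u n = w ∧ (∀ i ≤ n, (χ (u i) : ℕ) = i % k) ∧
    ∀ i < n, (u i, u (i + 1)) ∈ E

variable {E χ x}

theorem hasColorfulWalk_zero (hx : (χ x : ℕ) = 0) : HasColorfulWalk E χ x 0 x :=
  ⟨fun _ => x, rfl, rfl, fun i hi => by simp [hx, Nat.le_zero.mp hi],
    fun _ h => absurd h (Nat.not_lt_zero _)⟩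

theorem HasColorfulWalk.snoc {n : ℕ} {v w : V} (h : HasColorfulWalk E χ x n v)
    (hw : (χ w : ℕ) = (n + 1) % k) (hvw : (v, w) ∈ E) : HasColorfulWalk E χ x (n + 1) w := by
  obtain ⟨u, hu0, hun, hχ, hE⟩ := h
  refine ⟨Function.update u (n + 1) w, by simp [hu0], by simp, fun i hi => ?_, fun i hi => ?_⟩
  · rcases Nat.lt_or_eq_of_le hi with hi | rfl
    · simpa [Function.update_of_ne hi.ne] using hχ i (by omega)
    · simpa using hw
  · rcases Nat.lt_or_eq_of_le (Nat.le_of_lt_succ hi) with hi | rfl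
    · simpa [Function.update_of_ne (by omega : i ≠ n + 1),
        Function.update_of_ne (by omega : i + 1 ≠ n + 1)] using hE i hi
    · simpa [Function.update_of_ne (by omega : i ≠ i + 1), hun] using hvw

theorem HasColorfulWalk.hasColorfulCycle (hk : 2 ≤ k) (h : HasColorfulWalk E χ x k x) :
    HasColorfulCycle E k hk χ x := by
  obtain ⟨u, hu0, huk, hχ, hE⟩ := h
  refine ⟨fun ℓ => u ℓ, hu0, fun ℓ => Fin.ext ?_, fun ℓ => ?_⟩
  · rw [hχ ℓ ℓ.2.le, Nat.mod_eq_of_lt ℓ.2]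
  · have hsucc : ((ℓ + ⟨1, by omega⟩ : Fin k) : ℕ) = (ℓ + 1) % k := by simp [Fin.val_add]
    simp only [hsucc]
    obtain hlt | heq : (ℓ : ℕ) + 1 < k ∨ (ℓ : ℕ) + 1 = k := by omega
    · rw [Nat.mod_eq_of_lt hlt]
      exact hE ℓ ℓ.2
    · rw [heq, Nat.mod_self, hu0, ← huk]
      simpa only [heq] using hE ℓ ℓ.2

end ColorfulWalk

section ChainGadget

open SimpleGraph

variable {V : Type*} {E : Set (V × V)} {k c : ℕ} {χ : V → Fin k} {x : V}

def layerBottom (hx : (χ x : ℕ) = 0) : LayerVert k χ :=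
  ⟨(0, x), by simpa using hx⟩

def layerTop (hx : (χ x : ℕ) = 0) : LayerVert k χ :=
  ⟨(Fin.last k, x), by simpa [Nat.mod_self] using hx⟩

def chainLevel (q : Fin c × LayerVert k χ) : ℤ :=
  (q.1 : ℕ) * (k + 1) + (q.2.1.1 : ℕ)

theorem chainLevel_eq_of_chainKRel {a b : Fin c × LayerVert k χ}
    (h : chainKRel E k c χ x a b) : chainLevel b = chainLevel a + 1 := by
  rcases h with ⟨hm, hl, -⟩ | ⟨hm, hka, hkb, -, -⟩
  · simp only [chainLevel, hm, ← hl]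
    push_cast
    ring
  · simp only [chainLevel, hka, hkb, ← hm]
    push_cast
    ring

theorem chainKGraph_adj_of_chainKRel {a b : Fin c × LayerVert k χ}
    (h : chainKRel E k c χ x a b) : (chainKGraph E k c χ x).Adj a b := by
  refine (fromRel_adj _ _ _).mpr ⟨?_, Or.inl h⟩
  rintro rfl
  simpa using chainLevel_eq_of_chainKRel h

open Classical in
noncomputable def chainPenalizedLevel (E : Set (V × V)) (x : V) (q : Fin c × LayerVert k χ) :
    ℤ :=
  (q.1 : ℕ) * (k + 3) + (q.2.1.1 : ℕ) + if HasColorfulWalk E χ x q.2.1.1 q.2.1.2 then 0 else 2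

theorem abs_chainPenalizedLevel_sub_le (hno : ¬HasColorfulWalk E χ x k x)
    {a b : Fin c × LayerVert k χ} (h : chainKRel E k c χ x a b) :
    |chainPenalizedLevel E x b - chainPenalizedLevel E x a| ≤ 1 := by
  rcases h with ⟨hm, hl, hE⟩ | ⟨hm, hka, hkb, hva, hvb⟩
  · have hstep (ha : HasColorfulWalk E χ x a.2.1.1 a.2.1.2) :
        HasColorfulWalk E χ x b.2.1.1 b.2.1.2 := by
      rw [← hl]
      exact ha.snoc (hl ▸ b.2.2) hE
    simp only [chainPenalizedLevel, hm, ← hl]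
    push_cast
    split_ifs with hb ha ha
    · exact abs_le.mpr ⟨by linarith, by linarith⟩
    · exact abs_le.mpr ⟨by linarith, by linarith⟩
    · exact absurd (hstep ha) hb
    · exact abs_le.mpr ⟨by linarith, by linarith⟩
  · have hb : HasColorfulWalk E χ x b.2.1.1 b.2.1.2 := by
      rw [hkb, hvb]
      exact hasColorfulWalk_zero (by simpa [hkb, hvb] using b.2.2)
    have ha : ¬HasColorfulWalk E χ x a.2.1.1 a.2.1.2 := by rwa [hka, hva]
    simp only [chainPenalizedLevel, if_pos hb, if_neg ha, hka, hkb, ← hm]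
    push_cast
    exact abs_le.mpr ⟨by linarith, by linarith⟩

theorem chainKGraph_le_walk_length (hc : 1 ≤ c) (hx : (χ x : ℕ) = 0)
    (p : (chainKGraph E k c χ x).Walk (⟨0, by omega⟩, layerBottom hx)
      (⟨c - 1, by omega⟩, layerTop hx)) :
    (k + 1) * c - 1 ≤ p.length := by
  have h := p.sub_le_length chainLevel fun _ _ =>
    le_add_one_of_fromRel_adj fun _ _ h => by simp [chainLevel_eq_of_chainKRel h]
  generalize p.length = n at h ⊢
  simp only [chainLevel, layerBottom, layerTop, Fin.val_last, Fin.val_zero, Nat.cast_zero,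
    zero_mul, add_zero, sub_zero, Nat.cast_sub hc, Nat.cast_one] at h
  zify [show 1 ≤ (k + 1) * c by nlinarith]
  linarith

theorem chainKGraph_le_walk_length_of_not_hasColorfulWalk (hc : 1 ≤ c)
    (hx : (χ x : ℕ) = 0) (hno : ¬HasColorfulWalk E χ x k x)
    (p : (chainKGraph E k c χ x).Walk (⟨0, by omega⟩, layerBottom hx)
      (⟨c - 1, by omega⟩, layerTop hx)) :
    (k + 3) * c - 1 ≤ p.length := by
  have h := p.sub_le_length (chainPenalizedLevel E x) fun _ _ =>
    le_add_one_of_fromRel_adj fun _ _ h => abs_chainPenalizedLevel_sub_le hno h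
  generalize p.length = n at h ⊢
  simp only [chainPenalizedLevel, layerBottom, layerTop, Fin.val_last, Fin.val_zero,
    Nat.cast_zero, zero_mul, add_zero, hno, hasColorfulWalk_zero hx,
    ↓reduceIte, sub_zero, Nat.cast_sub hc, Nat.cast_one] at h
  zify [show 1 ≤ (k + 3) * c by nlinarith]
  linarith

def cycleLayerVert (hk : 0 < k) (v : Fin k → V) (hv : ∀ ℓ, χ (v ℓ) = ℓ) (i : ℕ) :
    LayerVert k χ :=
  ⟨(Fin.ofNat (k + 1) i, v ⟨i % (k + 1) % k, Nat.mod_lt _ hk⟩), congrArg Fin.val (hv _)⟩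

theorem chainKGraph_adj_layerTop_layerBottom (hx : (χ x : ℕ) = 0) {m m' : Fin c}
    (h : (m : ℕ) + 1 = m') : (chainKGraph E k c χ x).Adj (m, layerTop hx) (m', layerBottom hx) :=
  chainKGraph_adj_of_chainKRel (Or.inr ⟨h, rfl, rfl, rfl, rfl⟩)

theorem HasColorfulCycle.exists_walk_layerBottom_layerTop {hk : 2 ≤ k}
    (h : HasColorfulCycle E k hk χ x) (hx : (χ x : ℕ) = 0) (m : Fin c) :
    ∃ p : (chainKGraph E k c χ x).Walk (m, layerBottom hx) (m, layerTop hx), p.length = k := by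
  obtain ⟨v, hv0, hχ, hE⟩ := h
  let f (i : ℕ) : Fin c × LayerVert k χ := (m, cycleLayerVert (by omega) v hχ i)
  have hadj (i : ℕ) (hi : i < k) : (chainKGraph E k c χ x).Adj (f i) (f (i + 1)) := by
    have hi' : i % (k + 1) = i := Nat.mod_eq_of_lt (by omega)
    have hi1 : (i + 1) % (k + 1) = i + 1 := Nat.mod_eq_of_lt (by omega)
    refine chainKGraph_adj_of_chainKRel (Or.inl ⟨rfl, ?_, ?_⟩)
    · simp [f, cycleLayerVert, hi', hi1]
    · convert hE ⟨i, hi⟩ using 4 <;> refine congrArg v (Fin.ext ?_)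
      · simp [hi', Nat.mod_eq_of_lt hi]
      · simp [hi1, Fin.val_add]
  obtain ⟨p, hp⟩ := exists_walk_length_eq_mul f 1 k fun i hi =>
    ⟨(hadj i hi).toWalk, (hadj i hi).length_toWalk⟩
  have hbot : f 0 = (m, layerBottom hx) := by simp [f, cycleLayerVert, layerBottom, hv0]
  have htop : f k = (m, layerTop hx) := by simp [f, cycleLayerVert, layerTop, hv0]
  exact ⟨p.copy hbot htop, by simpa using hp⟩

theorem HasColorfulCycle.exists_chainKGraph_walk {hk : 2 ≤ k}
    (h : HasColorfulCycle E k hk χ x) (hc : 1 ≤ c) (hx : (χ x : ℕ) = 0) :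
    ∃ p : (chainKGraph E k c χ x).Walk (⟨0, by omega⟩, layerBottom hx)
      (⟨c - 1, by omega⟩, layerTop hx), p.length = (k + 1) * c - 1 := by
  have : NeZero c := ⟨by omega⟩
  let f (m : ℕ) : Fin c × LayerVert k χ := (Fin.ofNat c m, layerBottom hx)
  have hstep (m : ℕ) (hm : m < c - 1) :
      ∃ p : (chainKGraph E k c χ x).Walk (f m) (f (m + 1)), p.length = k + 1 := by
    obtain ⟨p, hp⟩ := h.exists_walk_layerBottom_layerTop hx (Fin.ofNat c m)
    have hnext : (Fin.ofNat c m : ℕ) + 1 = Fin.ofNat c (m + 1) := by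
      simp only [Fin.val_ofNat, Nat.mod_eq_of_lt (show m < c by omega),
        Nat.mod_eq_of_lt (show m + 1 < c by omega)]
    exact ⟨p.concat (chainKGraph_adj_layerTop_layerBottom hx hnext), by simp [hp]⟩
  obtain ⟨p, hp⟩ := exists_walk_length_eq_mul f (k + 1) (c - 1) hstep
  obtain ⟨q, hq⟩ := h.exists_walk_layerBottom_layerTop hx (⟨c - 1, by omega⟩ : Fin c)
  have hfirst : f 0 = (⟨0, by omega⟩, layerBottom hx) := by simp [f]
  have hlast : f (c - 1) = (⟨c - 1, by omega⟩, layerBottom hx) := by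
    simp [f, Fin.ext_iff, Nat.mod_eq_of_lt (show c - 1 < c by omega)]
  refine ⟨(p.copy hfirst hlast).append q, ?_⟩
  obtain ⟨c, rfl⟩ := Nat.exists_eq_add_of_le' hc
  simp only [Walk.length_append, Walk.length_copy, hp, hq, Nat.add_sub_cancel]
  symm
  apply Nat.sub_eq_of_eq_add
  ring

end ChainGadget

/-- Correctness of the fully dynamic `k`-cycle construction: in the chained gadget `G'`
there is a walk from the vertex `(0,x)` of the first copy to the vertex `(k,x)` of the last
copy of length strictly less than `(k+2)c − 1` iff `x` lies on a colorful directed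
`k`-cycle; if so, the distance between these vertices is `(k+1)c − 1`, and if not, every
such walk has length at least `(k+3)c − 1`. -/
theorem stmt13 {V : Type*} (E : Set (V × V)) (k c : ℕ) (hk : 2 ≤ k)
    (hc : 1 ≤ c) (χ : V → Fin k) (x : V) (hx : (χ x : ℕ) = 0) :
    ((∃ p : (chainKGraph E k c χ x).Walk
        (⟨0, by omega⟩, ⟨(0, x), by simpa using hx⟩)
        (⟨c - 1, by omega⟩, ⟨(Fin.last k, x), by simpa [Nat.mod_self] using hx⟩),
      p.length < (k + 2) * c - 1) ↔ HasColorfulCycle E k hk χ x) ∧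
    (HasColorfulCycle E k hk χ x →
      (chainKGraph E k c χ x).dist
        (⟨0, by omega⟩, ⟨(0, x), by simpa using hx⟩)
        (⟨c - 1, by omega⟩, ⟨(Fin.last k, x), by simpa [Nat.mod_self] using hx⟩)
        = (k + 1) * c - 1) ∧
    (¬HasColorfulCycle E k hk χ x →
      ∀ p : (chainKGraph E k c χ x).Walk
        (⟨0, by omega⟩, ⟨(0, x), by simpa using hx⟩)
        (⟨c - 1, by omega⟩, ⟨(Fin.last k, x), by simpa [Nat.mod_self] using hx⟩),
      (k + 3) * c - 1 ≤ p.length) := by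
  have hlong (hno : ¬HasColorfulCycle E k hk χ x) :=
    chainKGraph_le_walk_length_of_not_hasColorfulWalk hc hx fun hw => hno (hw.hasColorfulCycle hk)
  have hlt : (k + 1) * c - 1 < (k + 2) * c - 1 := by
    rw [show (k + 2) * c = (k + 1) * c + c by ring]
    have : 1 ≤ (k + 1) * c := Nat.one_le_iff_ne_zero.mpr (by positivity)
    omega
  have hle : (k + 2) * c - 1 ≤ (k + 3) * c - 1 := by gcongr; omega
  refine ⟨⟨?_, fun h => ?_⟩, fun h => ?_, hlong⟩
  · rintro ⟨p, hp⟩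
    by_contra hno
    have hp' : (k + 3) * c - 1 ≤ p.length := hlong hno p
    omega
  · obtain ⟨p, hp⟩ := h.exists_chainKGraph_walk hc hx
    exact ⟨p, hp ▸ hlt⟩
  · obtain ⟨p, hp⟩ := h.exists_chainKGraph_walk hc hx
    obtain ⟨q, hq⟩ := p.reachable.exists_walk_length_eq_dist
    exact le_antisymm (hp ▸ SimpleGraph.dist_le p) (hq ▸ chainKGraph_le_walk_length hc hx q)
end

section
/- Assume b ≥ 1. Let v ∈ V and let j ≤ i be natural numbers with i ≤ k. If there exists a vertex a ∈ A_{i+1} with dist(v,a) ≤ b^{i+1}/8, then every vertex a' of level j with dist(v,a') ≤ b^{j+1}/8 is not active. -/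
/-!
The vertex `a ∈ A_{i+1}` has some level `q ≥ i + 1 > j`, and `q ≤ k` because `A_{k+1} = ∅`.
By the triangle inequality through `v`, `dist(a', a) ≤ (b^{j+1} + b^{i+1}) / 8`, and both
`b^{j+1}` and `b^{i+1}` are terms of the sum `C(j, q)`, so this is at most `C(j, q) / 4`.
-/

lemma exists_mem_sdiff_succ_of_mem_of_notMem {α : Type*} {A : ℕ → Set α} {a : α} {m n : ℕ}
    (hmn : m ≤ n) (hm : a ∈ A m) (hn : a ∉ A n) :
    ∃ q, m ≤ q ∧ q < n ∧ a ∈ A q \ A (q + 1) := by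
  induction n, hmn using Nat.le_induction with
  | base => exact absurd hm hn
  | succ n hmn ih =>
    by_cases ha : a ∈ A n
    · exact ⟨n, hmn, n.lt_succ_self, ha, hn⟩
    · obtain ⟨q, hmq, hqn, hq⟩ := ih ha
      exact ⟨q, hmq, hqn.trans n.lt_succ_self, hq⟩

lemma pow_add_pow_le_two_mul_sum_Icc {R : Type*} [CommSemiring R] [PartialOrder R]
    [IsOrderedRing R] {b : R} (hb : 0 ≤ b) {j i q : ℕ} (hji : j ≤ i) (hiq : i < q) :
    b ^ (j + 1) + b ^ (i + 1) ≤ 2 * ∑ y ∈ Finset.Icc (j + 1) q, b ^ y := by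
  have hterm : ∀ y ∈ Finset.Icc (j + 1) q, b ^ y ≤ ∑ y ∈ Finset.Icc (j + 1) q, b ^ y :=
    fun y hy => Finset.single_le_sum (fun y _ => pow_nonneg hb y) hy
  have hj := hterm (j + 1) (Finset.mem_Icc.2 ⟨le_rfl, by omega⟩)
  have hi := hterm (i + 1) (Finset.mem_Icc.2 ⟨by omega, hiq⟩)
  rw [two_mul]
  exact add_le_add hj hi

theorem stmt15_general {V : Type*} (G : SimpleGraph V)
    (k : ℕ) (A : ℕ → Set V)
    (hAtop : A (k + 1) = ∅)
    (b : ℝ) (hb : 1 ≤ b)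
    (C : ℕ → ℕ → ℝ) (hC : ∀ p q, C p q = ∑ y ∈ Finset.Icc (p + 1) q, b ^ y)
    (v : V) (i j : ℕ) (hji : j ≤ i) (hik : i ≤ k)
    (hex : ∃ a ∈ A (i + 1), G.Reachable v a ∧ (G.dist v a : ℝ) ≤ b ^ (i + 1) / 8) :
    ∀ a' ∈ A j \ A (j + 1),
      (G.Reachable v a' ∧ (G.dist v a' : ℝ) ≤ b ^ (j + 1) / 8) →
      ∃ q, j < q ∧ ∃ a'' ∈ A q \ A (q + 1), G.Reachable a' a'' ∧
        (G.dist a' a'' : ℝ) ≤ C j q / 4 := by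
  rintro a' - ⟨hva', hda'⟩
  obtain ⟨a, ha, hva, hda⟩ := hex
  obtain ⟨q, hiq, -, haq⟩ := exists_mem_sdiff_succ_of_mem_of_notMem (by omega : i + 1 ≤ k + 1)
    ha (hAtop ▸ Set.notMem_empty a)
  refine ⟨q, by omega, a, haq, hva'.symm.trans hva, ?_⟩
  have htri : (G.dist a' a : ℝ) ≤ G.dist v a' + G.dist v a := by
    rw [G.dist_comm (u := v)]
    exact_mod_cast hva'.symm.dist_triangle_left a
  have hsum := pow_add_pow_le_two_mul_sum_Icc (zero_le_one.trans hb) hji hiq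
  rw [hC]
  linarith

/-- If `b ≥ 1`, `j ≤ i ≤ k`, and some vertex `a ∈ A_{i+1}` satisfies `dist(v,a) ≤ b^{i+1}/8`,
then every vertex `a'` of level `j` with `dist(v,a') ≤ b^{j+1}/8` is not active, i.e. there is
a level `q > j` and a vertex `a''` of level `q` with `dist(a',a'') ≤ C(j,q)/4`. -/
theorem stmt15 {V : Type*} [Fintype V] (G : SimpleGraph V)
    (k : ℕ) (hk : 1 ≤ k) (A : ℕ → Set V)
    (hA0 : A 0 = Set.univ) (hnest : ∀ i, A (i + 1) ⊆ A i) (hAtop : A (k + 1) = ∅)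
    (b : ℝ) (hb : 1 ≤ b)
    (C : ℕ → ℕ → ℝ) (hC : ∀ p q, C p q = ∑ y ∈ Finset.Icc (p + 1) q, b ^ y)
    (v : V) (i j : ℕ) (hji : j ≤ i) (hik : i ≤ k)
    (hex : ∃ a ∈ A (i + 1), G.Reachable v a ∧ (G.dist v a : ℝ) ≤ b ^ (i + 1) / 8) :
    ∀ a' ∈ A j \ A (j + 1),
      (G.Reachable v a' ∧ (G.dist v a' : ℝ) ≤ b ^ (j + 1) / 8) →
      ∃ q, j < q ∧ ∃ a'' ∈ A q \ A (q + 1), G.Reachable a' a'' ∧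
        (G.dist a' a'' : ℝ) ≤ C j q / 4 :=
  stmt15_general G k A hAtop b hb C hC v i j hji hik hex
end

section
/- Suppose a vertex a of level p is not active, and let j be the largest level such that some vertex of level j is at distance at most ε'^{−(j+1)} − ε'^{−(p+1)} from a (such a j exists and satisfies p < j ≤ k). Then every vertex a' of level j with dist(a,a') ≤ ε'^{−(j+1)} − ε'^{−(p+1)} is active. -/
/-! Any witness `a''` of a level `q > j` near an `a'` as in the statement would, by the
triangle inequality, lie within `ε'^{-(j+1)} − ε'^{-(p+1)} + ε'^{-(q+1)} − ε'^{-(j+1)}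
= ε'^{-(q+1)} − ε'^{-(p+1)}` of `a`, contradicting the maximality of `j`. -/

namespace SimpleGraph

variable {V : Type*} (G : SimpleGraph V)

lemma reachable_dist_le_sub_trans {a b c : V} {x y z : ℝ}
    (hab : G.Reachable a b ∧ (G.dist a b : ℝ) ≤ y - x)
    (hbc : G.Reachable b c ∧ (G.dist b c : ℝ) ≤ z - y) :
    G.Reachable a c ∧ (G.dist a c : ℝ) ≤ z - x := by
  refine ⟨hab.1.trans hbc.1, ?_⟩
  calc (G.dist a c : ℝ) ≤ G.dist a b + G.dist b c := by
        exact_mod_cast hab.1.dist_triangle_left c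
    _ ≤ (y - x) + (z - y) := add_le_add hab.2 hbc.2
    _ = z - x := by ring

end SimpleGraph

lemma Set.le_of_mem_of_succ_eq_empty {α : Type*} {A : ℕ → Set α} {k j : ℕ} {x : α}
    (hnest : ∀ i, A (i + 1) ⊆ A i) (hAtop : A (k + 1) = ∅) (hx : x ∈ A j) : j ≤ k := by
  by_contra! h
  have hx' : x ∈ A (k + 1) := antitone_nat_of_succ_le hnest (Nat.succ_le_of_lt h) hx
  simp [hAtop] at hx'

theorem stmt16_general {V : Type*} (G : SimpleGraph V)
    (k : ℕ) (A : ℕ → Set V)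
    (hnest : ∀ i, A (i + 1) ⊆ A i) (hAtop : A (k + 1) = ∅)
    (ε' : ℝ)
    (a : V) (p : ℕ)
    (hinactive : ∃ q, p < q ∧ ∃ a' ∈ A q \ A (q + 1), G.Reachable a a' ∧
      (G.dist a a' : ℝ) ≤ ε' ^ (-((q : ℤ) + 1)) - ε' ^ (-((p : ℤ) + 1)))
    (j : ℕ)
    (hj : ∃ a' ∈ A j \ A (j + 1), G.Reachable a a' ∧
      (G.dist a a' : ℝ) ≤ ε' ^ (-((j : ℤ) + 1)) - ε' ^ (-((p : ℤ) + 1)))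
    (hjmax : ∀ j', j < j' → ¬∃ a' ∈ A j' \ A (j' + 1), G.Reachable a a' ∧
      (G.dist a a' : ℝ) ≤ ε' ^ (-((j' : ℤ) + 1)) - ε' ^ (-((p : ℤ) + 1))) :
    p < j ∧ j ≤ k ∧
    ∀ a' ∈ A j \ A (j + 1),
      (G.Reachable a a' ∧
        (G.dist a a' : ℝ) ≤ ε' ^ (-((j : ℤ) + 1)) - ε' ^ (-((p : ℤ) + 1))) →
      ¬∃ q, j < q ∧ ∃ a'' ∈ A q \ A (q + 1), G.Reachable a' a'' ∧
        (G.dist a' a'' : ℝ) ≤ ε' ^ (-((q : ℤ) + 1)) - ε' ^ (-((j : ℤ) + 1)) := by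
  have hpj : p < j := by
    obtain ⟨q, hpq, hq⟩ := hinactive
    by_contra! hjp
    exact hjmax q (by omega) hq
  obtain ⟨_, ⟨haj, _⟩, _⟩ := hj
  refine ⟨hpj, Set.le_of_mem_of_succ_eq_empty hnest hAtop haj, ?_⟩
  rintro a' - ha' ⟨q, hjq, a'', ha'', ha''near⟩
  exact hjmax q hjq ⟨a'', ha'', G.reachable_dist_le_sub_trans ha' ha''near⟩

/-- If a vertex `a` of level `p` is not active, and `j` is the largest level such that some
vertex of level `j` is within `ε'^{-(j+1)} − ε'^{-(p+1)}` of `a`, then `p < j ≤ k` and every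
vertex `a'` of level `j` within that distance of `a` is active. -/
theorem stmt16 {V : Type*} [Fintype V] (G : SimpleGraph V)
    (k : ℕ) (hk : 1 ≤ k) (A : ℕ → Set V)
    (hA0 : A 0 = Set.univ) (hnest : ∀ i, A (i + 1) ⊆ A i) (hAtop : A (k + 1) = ∅)
    (ε' : ℝ) (hε0 : 0 < ε') (hε1 : ε' < 1)
    (a : V) (p : ℕ) (ha : a ∈ A p \ A (p + 1))
    (hinactive : ∃ q, p < q ∧ ∃ a' ∈ A q \ A (q + 1), G.Reachable a a' ∧
      (G.dist a a' : ℝ) ≤ ε' ^ (-((q : ℤ) + 1)) - ε' ^ (-((p : ℤ) + 1)))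
    (j : ℕ)
    (hj : ∃ a' ∈ A j \ A (j + 1), G.Reachable a a' ∧
      (G.dist a a' : ℝ) ≤ ε' ^ (-((j : ℤ) + 1)) - ε' ^ (-((p : ℤ) + 1)))
    (hjmax : ∀ j', j < j' → ¬∃ a' ∈ A j' \ A (j' + 1), G.Reachable a a' ∧
      (G.dist a a' : ℝ) ≤ ε' ^ (-((j' : ℤ) + 1)) - ε' ^ (-((p : ℤ) + 1))) :
    p < j ∧ j ≤ k ∧
    ∀ a' ∈ A j \ A (j + 1),
      (G.Reachable a a' ∧
        (G.dist a a' : ℝ) ≤ ε' ^ (-((j : ℤ) + 1)) - ε' ^ (-((p : ℤ) + 1))) →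
      ¬∃ q, j < q ∧ ∃ a'' ∈ A q \ A (q + 1), G.Reachable a' a'' ∧
        (G.dist a' a'' : ℝ) ≤ ε' ^ (-((q : ℤ) + 1)) - ε' ^ (-((j : ℤ) + 1)) :=
  stmt16_general G k A hnest hAtop ε' a p hinactive j hj hjmax
end

section
/- Suppose moreover that ε' ≤ 1/3. Let v be a vertex and i a natural number with i ≤ k. If there exists a vertex a'' ∈ A_{i+1} with dist(v,a'') ≤ ε'^{−(i+1)}, then every vertex a' of level i with dist(v,a') ≤ ε'^{−(i+1)} is not active. -/
/-! The vertex `a''` has some level `q ≥ i + 1`, and it witnesses that `a'` is not active: by the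
triangle inequality through `v`, `dist(a', a'') ≤ 2 ε'^{-(i+1)}`, while `ε' ≤ 1/3` gives
`ε'^{-(q+1)} - ε'^{-(i+1)} ≥ (ε'^{-1} - 1) ε'^{-(i+1)} ≥ 2 ε'^{-(i+1)}`. -/

theorem exists_level_ge_of_mem {α : Type*} {A : ℕ → Set α} {k m : ℕ} {a : α}
    (hAtop : A (k + 1) = ∅) (hm : m ≤ k + 1) (ha : a ∈ A m) :
    ∃ q, m ≤ q ∧ a ∈ A q \ A (q + 1) := by
  classical
  set q := Nat.findGreatest (fun ℓ => a ∈ A ℓ) (k + 1)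
  have hmq : m ≤ q := Nat.le_findGreatest hm ha
  have haq : a ∈ A q := Nat.findGreatest_spec (P := fun ℓ => a ∈ A ℓ) hm ha
  have hqk : q < k + 1 := by
    refine lt_of_le_of_ne (Nat.findGreatest_le _) fun h => ?_
    rw [h, hAtop] at haq
    exact haq
  exact ⟨q, hmq, haq, Nat.findGreatest_is_greatest (Nat.lt_succ_self q) hqk⟩

theorem three_mul_zpow_neg_le_zpow_neg {ε : ℝ} (hε0 : 0 < ε) (hε3 : ε ≤ 1 / 3) {i q : ℕ}
    (hiq : i < q) : 3 * ε ^ (-((i : ℤ) + 1)) ≤ ε ^ (-((q : ℤ) + 1)) := by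
  have h3 : 3 ≤ ε⁻¹ := by rw [le_inv_comm₀ three_pos hε0]; linarith
  calc 3 * ε ^ (-((i : ℤ) + 1)) ≤ ε ^ (-((i : ℤ) + 1)) * ε⁻¹ := by
        rw [mul_comm]; gcongr
    _ = ε ^ (-((i : ℤ) + 1) - 1) := (zpow_sub_one₀ hε0.ne' _).symm
    _ ≤ ε ^ (-((q : ℤ) + 1)) := by
        apply zpow_le_zpow_right_of_le_one₀ hε0 (by linarith)
        have : (i : ℤ) < q := by exact_mod_cast hiq
        omega

open Classical in
theorem stmt17_general {V : Type*} (G : SimpleGraph V)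
    (k : ℕ) (A : ℕ → Set V)
    (hAtop : A (k + 1) = ∅)
    (ε' : ℝ) (hε0 : 0 < ε') (hε3 : ε' ≤ 1 / 3)
    (v : V) (i : ℕ) (hik : i ≤ k)
    (hex : ∃ a'' ∈ A (i + 1), G.Reachable v a'' ∧
      (G.dist v a'' : ℝ) ≤ ε' ^ (-((i : ℤ) + 1))) :
    ∀ a' ∈ A i \ A (i + 1),
      (G.Reachable v a' ∧ (G.dist v a' : ℝ) ≤ ε' ^ (-((i : ℤ) + 1))) →
      ∃ q, i < q ∧ ∃ a'' ∈ A q \ A (q + 1), G.Reachable a' a'' ∧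
        (G.dist a' a'' : ℝ) ≤ ε' ^ (-((q : ℤ) + 1)) - ε' ^ (-((i : ℤ) + 1)) := by
  obtain ⟨a'', ha'', hva'', hdist''⟩ := hex
  rintro a' - ⟨hva', hdist'⟩
  obtain ⟨q, hiq, hlevel⟩ := exists_level_ge_of_mem hAtop (by omega) ha''
  have htri : (G.dist a' a'' : ℝ) ≤ G.dist v a' + G.dist v a'' := by
    have := hva'.symm.dist_triangle_left a''
    rw [G.dist_comm (u := a') (v := v)] at this
    exact_mod_cast this
  have hgap := three_mul_zpow_neg_le_zpow_neg hε0 hε3 (Nat.lt_of_succ_le hiq)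
  exact ⟨q, hiq, a'', hlevel, hva'.symm.trans hva'', by linarith⟩

/-- If `ε' ≤ 1/3`, `i ≤ k`, and some vertex `a'' ∈ A_{i+1}` satisfies
`dist(v,a'') ≤ ε'^{-(i+1)}`, then every vertex `a'` of level `i` with
`dist(v,a') ≤ ε'^{-(i+1)}` is not active. -/
theorem stmt17 {V : Type*} [Fintype V] (G : SimpleGraph V)
    (k : ℕ) (hk : 1 ≤ k) (A : ℕ → Set V)
    (hA0 : A 0 = Set.univ) (hnest : ∀ i, A (i + 1) ⊆ A i) (hAtop : A (k + 1) = ∅)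
    (ε' : ℝ) (hε0 : 0 < ε') (hε1 : ε' < 1) (hε3 : ε' ≤ 1 / 3)
    (v : V) (i : ℕ) (hik : i ≤ k)
    (hex : ∃ a'' ∈ A (i + 1), G.Reachable v a'' ∧
      (G.dist v a'' : ℝ) ≤ ε' ^ (-((i : ℤ) + 1))) :
    ∀ a' ∈ A i \ A (i + 1),
      (G.Reachable v a' ∧ (G.dist v a' : ℝ) ≤ ε' ^ (-((i : ℤ) + 1))) →
      ∃ q, i < q ∧ ∃ a'' ∈ A q \ A (q + 1), G.Reachable a' a'' ∧
        (G.dist a' a'' : ℝ) ≤ ε' ^ (-((q : ℤ) + 1)) - ε' ^ (-((i : ℤ) + 1)) :=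
  stmt17_general G k A hAtop ε' hε0 hε3 v i hik hex
end

section
/- (Diameter bound for graphs covered by heavy balls.) Let G be a connected finite simple graph with m edges, and let r ≥ 1 and μ ≥ 1 be integers. Suppose that for every vertex x there exists a vertex h with dist(x,h) ≤ r such that the set of edges of G with both endpoints in B(h,r) has size at least μ. Then for all vertices u and w, dist(u,w) < (4r+2)·m/μ. -/
/-!
Mark every `(4r+2)`-th vertex along a geodesic from `u` to `w`: this gives `⌊d/(4r+2)⌋ + 1`
vertices, pairwise more than `4r` apart. The heavy balls attached to them then have centres
pairwise more than `2r` apart, so their edge sets are disjoint, and each holds at least `μ`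
edges. Hence `(⌊d/(4r+2)⌋ + 1) μ ≤ m`, and `d < (4r+2) m / μ` follows.
-/

open Finset

theorem Set.card_mul_le_ncard_of_pairwiseDisjoint {α ι : Type*} {t : Set α} (ht : t.Finite)
    {s : Finset ι} {f : ι → Set α} (hsub : ∀ i ∈ s, f i ⊆ t)
    (hdisj : (s : Set ι).PairwiseDisjoint f) {μ : ℕ} (hμ : ∀ i ∈ s, μ ≤ (f i).ncard) :
    #s * μ ≤ t.ncard :=
  calc #s * μ = ∑ _i ∈ s, μ := by rw [sum_const, smul_eq_mul]
    _ ≤ ∑ i ∈ s, (f i).ncard := sum_le_sum hμ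
    _ = (⋃ i ∈ s, f i).ncard := by
      rw [← set_biUnion_coe,
        s.finite_toSet.ncard_biUnion (fun i hi ↦ ht.subset (hsub i hi)) hdisj,
        finsum_mem_coe_finset]
    _ ≤ t.ncard := Set.ncard_le_ncard (Set.iUnion₂_subset hsub) ht

namespace SimpleGraph

variable {V : Type*} {G : SimpleGraph V}

def ballEdgeSet (G : SimpleGraph V) (c : V) (r : ℕ) : Set (Sym2 V) :=
  {e ∈ G.edgeSet | ∀ y ∈ e, G.dist c y ≤ r}

theorem Connected.disjoint_ballEdgeSet (hG : G.Connected) {a b : V} {r : ℕ}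
    (hab : 2 * r < G.dist a b) : Disjoint (G.ballEdgeSet a r) (G.ballEdgeSet b r) := by
  refine Set.disjoint_left.2 fun e ⟨_, ha⟩ ⟨_, hb⟩ ↦ ?_
  have hay := ha _ e.out_fst_mem
  have hby := hb _ e.out_fst_mem
  have := hG.dist_triangle (u := a) (v := e.out.1) (w := b)
  rw [dist_comm (u := e.out.1)] at this
  omega

theorem Connected.dist_le_add_add (hG : G.Connected) (x a b y : V) :
    G.dist x y ≤ G.dist x a + G.dist a b + G.dist b y :=
  (hG.dist_triangle (v := a)).trans (Nat.add_le_add_left (hG.dist_triangle (v := b)) _)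
    |>.trans_eq (add_assoc _ _ _).symm

theorem Walk.dist_getVert_le {u v : V} (p : G.Walk u v) (n : ℕ) : G.dist u (p.getVert n) ≤ n :=
  (dist_le (p.take n)).trans (by simp [Walk.take_length])

theorem Walk.sub_le_dist_getVert {u v : V} {p : G.Walk u v} (hp : p.length = G.dist u v)
    {j : ℕ} (hj : j ≤ p.length) (i : ℕ) : j - i ≤ G.dist (p.getVert i) (p.getVert j) := by
  have hdist := length_eq_dist_of_subwalk hp (p.isSubwalk_take j)
  rw [Walk.take_length, min_eq_left hj] at hdist
  have := (p.take i).reachable.dist_triangle_left (p.getVert j)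
  have := p.dist_getVert_le i
  omega

theorem Walk.le_dist_getVert_mul {u v : V} {p : G.Walk u v} (hp : p.length = G.dist u v)
    {s i j : ℕ} (hij : i ≠ j) (hi : i * s ≤ p.length) (hj : j * s ≤ p.length) :
    s ≤ G.dist (p.getVert (i * s)) (p.getVert (j * s)) := by
  wlog h : i < j generalizing i j
  · rw [dist_comm]
    exact this hij.symm hj hi (by omega)
  refine le_trans ?_ (sub_le_dist_getVert hp hj _)
  rw [← Nat.sub_mul]
  exact Nat.le_mul_of_pos_left s (Nat.sub_pos_of_lt h)

theorem Connected.card_mul_le_ncard_edgeSet [Finite V] (hG : G.Connected) {r μ : ℕ}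
    (hheavy : ∀ x : V, ∃ h : V, G.dist x h ≤ r ∧ μ ≤ (G.ballEdgeSet h r).ncard)
    {ι : Type*} (s : Finset ι) (x : ι → V)
    (hx : ∀ i ∈ s, ∀ j ∈ s, i ≠ j → 4 * r < G.dist (x i) (x j)) :
    #s * μ ≤ G.edgeSet.ncard := by
  choose c hc hμ using hheavy
  refine Set.card_mul_le_ncard_of_pairwiseDisjoint G.edgeSet.toFinite
    (f := fun i ↦ G.ballEdgeSet (c (x i)) r) (fun _ _ ↦ Set.sep_subset _ _) ?_ (fun i _ ↦ hμ _)
  intro i hi j hj hij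
  refine hG.disjoint_ballEdgeSet ?_
  have := hx i hi j hj hij
  have := hG.dist_le_add_add (x i) (c (x i)) (c (x j)) (x j)
  have := hc (x i)
  have : G.dist (c (x j)) (x j) ≤ r := dist_comm.trans_le (hc _)
  omega

end SimpleGraph

theorem stmt18_general {V : Type*} [Fintype V] (G : SimpleGraph V) (hG : G.Connected)
    (r μ : ℕ) (hμ : 1 ≤ μ)
    (hheavy : ∀ x : V, ∃ h : V, G.dist x h ≤ r ∧
      μ ≤ {e ∈ G.edgeSet | ∀ y ∈ e, G.dist h y ≤ r}.ncard) :
    ∀ u w : V, (G.dist u w : ℝ) < (4 * r + 2) * G.edgeSet.ncard / μ := by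
  intro u w
  obtain ⟨p, hp⟩ := hG.exists_walk_length_eq_dist u w
  set s := 4 * r + 2
  set k := G.dist u w / s + 1
  have hsample : ∀ i ∈ range k, i * s ≤ p.length := fun i hi ↦ by
    rw [hp]
    exact (Nat.mul_le_mul_right s (Nat.lt_succ_iff.1 (mem_range.1 hi))).trans
      (Nat.div_mul_le_self _ _)
  have hpack : k * μ ≤ G.edgeSet.ncard := by
    simpa using hG.card_mul_le_ncard_edgeSet hheavy (range k) (fun i ↦ p.getVert (i * s))
      fun i hi j hj hij ↦ (show 4 * r < s by omega).trans_le
        (p.le_dist_getVert_mul hp hij (hsample i hi) (hsample j hj))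
  have hd : G.dist u w < k * s := by
    simpa [k, add_mul] using Nat.lt_div_mul_add (a := G.dist u w) (show 0 < s by omega)
  rw [lt_div_iff₀ (by exact_mod_cast hμ)]
  have : G.dist u w * μ < s * G.edgeSet.ncard :=
    calc G.dist u w * μ < k * s * μ := Nat.mul_lt_mul_of_pos_right hd hμ
      _ = s * (k * μ) := by ring
      _ ≤ s * G.edgeSet.ncard := Nat.mul_le_mul_left s hpack
  exact_mod_cast this

/-- Diameter bound for graphs covered by heavy balls: if `G` is a connected finite simple
graph with edge set of size `m`, and every vertex `x` has a vertex `h` with `dist(x,h) ≤ r`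
such that at least `μ` edges have both endpoints in the ball `B(h,r)`, then every pair of
vertices is at distance less than `(4r+2)·m/μ`. -/
theorem stmt18 {V : Type*} [Fintype V] (G : SimpleGraph V) (hG : G.Connected)
    (r μ : ℕ) (hr : 1 ≤ r) (hμ : 1 ≤ μ)
    (hheavy : ∀ x : V, ∃ h : V, G.dist x h ≤ r ∧
      μ ≤ {e ∈ G.edgeSet | ∀ y ∈ e, G.dist h y ≤ r}.ncard) :
    ∀ u w : V, (G.dist u w : ℝ) < (4 * r + 2) * G.edgeSet.ncard / μ :=
  stmt18_general G hG r μ hμ hheavy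
end
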